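/- arXiv:2203.15878 — 6 statements merged into one kernel-verified Lean document; each statement's English description precedes it below -/
import Mathlib

section
/- A finite connected simple graph G is a convex geometry with respect to the monophonic convexity if and only if G is chordal. -/
open SimpleGraph

variable {V : Type*} {W : Type*}

/-- The convex hull of `S`: the smallest convex set containing `S`. -/
def chull (Cvx : Set V → Prop) (S : Set V) : Set V := ⋂₀ {T | S ⊆ T ∧ Cvx T}

/-- The set of extreme vertices of `S`. -/
def extremeSet (Cvx : Set V → Prop) (S : Set V) : Set V := {x | x ∈ S ∧ Cvx (S \ {x})}

/-- A convexity is a convex geometry if every convex set is the convex hull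
of its extreme vertices. -/
def IsConvexGeometry (Cvx : Set V → Prop) : Prop :=
  ∀ S : Set V, Cvx S → S = chull Cvx (extremeSet Cvx S)

/-- Convexity induced by a system of p-walks: `S` is convex iff every vertex
lying on a p-walk between two vertices of `S` belongs to `S`. -/
def PConvex (G : SimpleGraph V) (P : ∀ ⦃u v : V⦄, G.Walk u v → Prop) (S : Set V) : Prop :=
  ∀ ⦃u v : V⦄, u ∈ S → v ∈ S → ∀ w : G.Walk u v, P w → ∀ x ∈ w.support, x ∈ S

/-- `x` and `y` appear consecutively (in either order) in the list `l`. -/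
def consecIn (l : List V) (x y : V) : Prop := [x, y] <:+: l ∨ [y, x] <:+: l

/-- An induced path: a path such that the only edges of `G` between its vertices
are the consecutive ones. -/
def IsInducedPathW (G : SimpleGraph V) {u v : V} (w : G.Walk u v) : Prop :=
  w.IsPath ∧ ∀ x ∈ w.support, ∀ y ∈ w.support, G.Adj x y → consecIn w.support x y

/-- An induced cycle: a cycle such that the only edges of `G` between its vertices
are the consecutive (cyclically) ones. -/
def IsInducedCycleW (G : SimpleGraph V) {u : V} (w : G.Walk u u) : Prop :=
  w.IsCycle ∧ ∀ x ∈ w.support, ∀ y ∈ w.support, G.Adj x y → consecIn w.support x y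

/-- A graph is chordal if it has no induced cycle of length at least 4. -/
def Chordal (G : SimpleGraph V) : Prop :=
  ¬ ∃ (u : V) (w : G.Walk u u), IsInducedCycleW G w ∧ 4 ≤ w.length

/-- The cycle `w` has an odd chord: an edge of `G` joining two vertices of the cycle
whose distance along the cycle is odd and greater than 1. -/
def HasOddChord (G : SimpleGraph V) {u : V} (w : G.Walk u u) : Prop :=
  ∃ i j : ℕ, ∃ hi : i < w.support.length, ∃ hj : j < w.support.length, i < j ∧
    G.Adj (w.support.get ⟨i, hi⟩) (w.support.get ⟨j, hj⟩) ∧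
    Odd (min (j - i) (w.length - (j - i))) ∧ 1 < min (j - i) (w.length - (j - i))

/-- A graph is strongly chordal if it is chordal and every even cycle of length
at least 6 has an odd chord. -/
def StronglyChordal (G : SimpleGraph V) : Prop :=
  Chordal G ∧ ∀ (u : V) (w : G.Walk u u), w.IsCycle → Even w.length → 6 ≤ w.length →
    HasOddChord G w

/-- Closed neighborhood `N[v]`. -/
def closedNbhd (G : SimpleGraph V) (v : V) : Set V := insert v (G.neighborSet v)

/-- A vertex is simple if the closed neighborhoods of its closed neighbors form a
family totally ordered by inclusion. -/
def SimpleVtx (G : SimpleGraph V) (v : V) : Prop :=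
  ∀ u ∈ closedNbhd G v, ∀ w ∈ closedNbhd G v,
    closedNbhd G u ⊆ closedNbhd G w ∨ closedNbhd G w ⊆ closedNbhd G u

/-- A vertex is simplicial if its closed neighborhood is a clique. -/
def SimplicialVtx (G : SimpleGraph V) (v : V) : Prop :=
  G.IsClique (closedNbhd G v)

/-- An even-chorded path: a path with no odd chord and such that no endpoint
lies in a chord. -/
def IsEvenChorded (G : SimpleGraph V) {u v : V} (w : G.Walk u v) : Prop :=
  w.IsPath ∧ ∀ i j : ℕ, ∀ hi : i < w.support.length, ∀ hj : j < w.support.length,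
    i + 1 < j → G.Adj (w.support.get ⟨i, hi⟩) (w.support.get ⟨j, hj⟩) →
      Even (j - i) ∧ 0 < i ∧ j < w.support.length - 1

/-- A tolled walk `u₀u₁…u_k`: `u₀uᵢ ∈ E(G)` implies `i = 1` and `u_ju_k ∈ E(G)`
implies `j = k - 1`. -/
def IsTolledWalk (G : SimpleGraph V) {u v : V} (w : G.Walk u v) : Prop :=
  ∀ i : ℕ, ∀ hi : i < w.support.length,
    (G.Adj u (w.support.get ⟨i, hi⟩) → i = 1) ∧
    (G.Adj (w.support.get ⟨i, hi⟩) v → i = w.support.length - 2)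

/-- A weakly toll walk `u₀u₁…u_k`: `u₀uᵢ ∈ E(G)` implies `uᵢ = u₁` and
`u_ju_k ∈ E(G)` implies `u_j = u_{k-1}`. -/
def IsWeaklyTollWalk (G : SimpleGraph V) {u v : V} (w : G.Walk u v) : Prop :=
  ∀ i : ℕ, ∀ hi : i < w.support.length,
    (G.Adj u (w.support.get ⟨i, hi⟩) → w.support.get ⟨i, hi⟩ = w.support.getD 1 u) ∧
    (G.Adj (w.support.get ⟨i, hi⟩) v → w.support.get ⟨i, hi⟩ = w.support.getD (w.support.length - 2) v)

/-- An interval graph: vertices can be assigned nonempty closed real intervals so that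
distinct vertices are adjacent iff the intervals intersect. -/
def IsIntervalGraph (G : SimpleGraph V) : Prop :=
  ∃ a b : V → ℝ, (∀ v, a v ≤ b v) ∧
    ∀ u v : V, u ≠ v →
      (G.Adj u v ↔ (Set.Icc (a u) (b u) ∩ Set.Icc (a v) (b v)).Nonempty)

/-- A proper interval graph: an interval model in which no interval properly
contains another. -/
def IsProperIntervalGraph (G : SimpleGraph V) : Prop :=
  ∃ a b : V → ℝ, (∀ v, a v ≤ b v) ∧
    (∀ u v : V, u ≠ v →
      (G.Adj u v ↔ (Set.Icc (a u) (b u) ∩ Set.Icc (a v) (b v)).Nonempty)) ∧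
    ∀ u v : V, ¬ (Set.Icc (a u) (b u) ⊂ Set.Icc (a v) (b v))

/-- An end vertex: some interval model in which its interval is an end interval. -/
def IsEndVertex (G : SimpleGraph V) (x : V) : Prop :=
  ∃ a b : V → ℝ, (∀ v, a v ≤ b v) ∧
    (∀ u v : V, u ≠ v →
      (G.Adj u v ↔ (Set.Icc (a u) (b u) ∩ Set.Icc (a v) (b v)).Nonempty)) ∧
    ((∀ v, a x ≤ a v) ∨ (∀ v, b v ≤ b x))

/-- `G` contains an induced subgraph isomorphic to `H`. -/
def HasInducedSubgraphIso (G : SimpleGraph V) (H : SimpleGraph W) : Prop :=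
  ∃ f : W ↪ V, ∀ a b : W, G.Adj (f a) (f b) ↔ H.Adj a b

def gemGraph : SimpleGraph (Fin 5) :=
  SimpleGraph.fromRel fun a b =>
    ((a : ℕ), (b : ℕ)) ∈ [(0,1),(1,2),(2,3),(4,0),(4,1),(4,2),(4,3)]

def houseGraph : SimpleGraph (Fin 5) :=
  SimpleGraph.fromRel fun a b =>
    ((a : ℕ), (b : ℕ)) ∈ [(0,1),(1,2),(2,3),(0,3),(0,4),(1,4)]

def dominoGraph : SimpleGraph (Fin 6) :=
  SimpleGraph.fromRel fun a b =>
    ((a : ℕ), (b : ℕ)) ∈ [(0,1),(1,2),(2,3),(0,3),(2,4),(4,5),(3,5)]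

def aGraph : SimpleGraph (Fin 6) :=
  SimpleGraph.fromRel fun a b =>
    ((a : ℕ), (b : ℕ)) ∈ [(0,1),(1,2),(2,3),(0,3),(2,4),(3,5)]

/-- A triangle path: a path such that any two of its vertices at distance
greater than 2 along the path are non-adjacent in `G`. -/
def IsTrianglePath (G : SimpleGraph V) {u v : V} (w : G.Walk u v) : Prop :=
  w.IsPath ∧ ∀ i j : ℕ, ∀ hi : i < w.support.length, ∀ hj : j < w.support.length,
    i + 2 < j → ¬ G.Adj (w.support.get ⟨i, hi⟩) (w.support.get ⟨j, hj⟩)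

/-- `S` is `H`-free convex. -/
def HFreeConvex [Fintype W] (G : SimpleGraph V) (H : SimpleGraph W) (S : Set V) : Prop :=
  ∀ (S' : Finset V), ↑S' ⊆ S → S'.card = Fintype.card W - 1 →
    ∀ x : V, Nonempty ((G.induce (↑S' ∪ {x} : Set V)) ≃g H) → x ∈ S

/-- `a b c d` is an induced path on four vertices of `G`. -/
def InducedP4 (G : SimpleGraph V) (a b c d : V) : Prop :=
  G.Adj a b ∧ G.Adj b c ∧ G.Adj c d ∧ ¬ G.Adj a c ∧ ¬ G.Adj a d ∧ ¬ G.Adj b d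

/-- Every connected component of `G` is a star. -/
def StarForest (G : SimpleGraph V) : Prop :=
  ∀ v : V, ∃ c : V, G.Reachable v c ∧ (∀ x, G.Reachable c x → x ≠ c → G.Adj c x) ∧
    ∀ x y, G.Adj c x → G.Adj c y → ¬ G.Adj x y

/-- An induced `n`-gem in `G`: `x 0, …, x n` is an induced path and `u` is adjacent
to all of them, the whole forming an induced subgraph of `G`. -/
def IsInducedNGem (G : SimpleGraph V) (n : ℕ) (x : Fin (n + 1) → V) (u : V) : Prop :=
  Function.Injective x ∧ (∀ i, x i ≠ u) ∧
  (∀ i j, G.Adj (x i) (x j) ↔ ((i : ℕ) + 1 = (j : ℕ) ∨ (j : ℕ) + 1 = (i : ℕ))) ∧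
  (∀ i, G.Adj u (x i))

/-- The induced `n`-gem is solved: there is an induced path of length 3 in `G`
connecting `x 0` and `x n` that avoids `u`. -/
def GemSolved (G : SimpleGraph V) (n : ℕ) (x : Fin (n + 1) → V) (u : V) : Prop :=
  ∃ w : G.Walk (x 0) (x (Fin.last n)), IsInducedPathW G w ∧ w.length = 3 ∧ u ∉ w.support



set_option linter.unnecessarySimpa false

/-- Induced path, as a list of vertices. -/
def IPl (G : SimpleGraph V) (l : List V) : Prop :=
  l.Chain' G.Adj ∧ l.Nodup ∧ ∀ x ∈ l, ∀ y ∈ l, G.Adj x y → consecIn l x y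

/-- A walk within a vertex set `X`, as a list. -/
def GChain (G : SimpleGraph V) (X : Set V) (u v : V) (l : List V) : Prop :=
  l.Chain' G.Adj ∧ l.head? = some u ∧ l.getLast? = some v ∧ ∀ x ∈ l, x ∈ X

/-- Reachability within a vertex set `X`. -/
def SReach (G : SimpleGraph V) (X : Set V) (u v : V) : Prop := ∃ l, GChain G X u v l

section Helpers
variable {G : SimpleGraph V} {X : Set V} {u v : V}

lemma infix_pair_of_getElem (l : List V) (k : ℕ) (h : k + 1 < l.length) :
    [l[k], l[k+1]] <:+: l := by
  refine ⟨l.take k, l.drop (k+2), ?_⟩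
  have h1 : l.drop k = l[k] :: l.drop (k+1) := List.drop_eq_getElem_cons (by omega)
  have h2 : l.drop (k+1) = l[k+1] :: l.drop (k+2) := List.drop_eq_getElem_cons h
  have := List.take_append_drop k l
  rw [h1, h2] at this
  simpa using this

lemma consecIn_symm {l : List V} {x y : V} (h : consecIn l x y) : consecIn l y x :=
  h.elim Or.inr Or.inl

lemma getLast?_take {l : List V} {k : ℕ} (hk0 : 0 < k) (hk : k ≤ l.length) :
    (l.take k).getLast? = some l[k-1] := by
  obtain ⟨m, rfl⟩ : ∃ m, k = m + 1 := ⟨k - 1, by omega⟩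
  rw [List.take_succ, List.getElem?_eq_getElem (by omega), Option.toList_some,
    List.getLast?_concat]
  simp only [Nat.add_sub_cancel]

lemma head?_drop {l : List V} {j : ℕ} (hj : j < l.length) :
    (l.drop j).head? = some l[j] := by
  rw [List.drop_eq_getElem_cons hj]; rfl

lemma getLast?_drop {l : List V} {j : ℕ} (hj : j < l.length) :
    (l.drop j).getLast? = l.getLast? := by
  rw [List.getLast?_eq_getElem?, List.getLast?_eq_getElem?, List.getElem?_drop]
  congr 1
  rw [List.length_drop]
  omega

/-- Splicing out a chord from a nodup chain list. -/
lemma splice_chord {l : List V} (hc : l.Chain' G.Adj) (hnd : l.Nodup) {i j : ℕ}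
    (hi : i < l.length) (hj : j < l.length) (hij : i + 2 ≤ j) (hadj : G.Adj l[i] l[j]) :
    ∃ l' : List V, l'.Chain' G.Adj ∧ l'.Nodup ∧ l'.head? = l.head? ∧
      l'.getLast? = l.getLast? ∧ (∀ x ∈ l', x ∈ l) ∧ l'.length < l.length := by
  refine ⟨l.take (i+1) ++ l.drop j, ?_, ?_, ?_, ?_, ?_, ?_⟩
  · apply List.isChain_append.mpr
    refine ⟨List.IsChain.take hc _, List.IsChain.drop hc _, ?_⟩
    intro x hx y hy
    rw [getLast?_take (by omega) (by omega)] at hx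
    rw [head?_drop hj] at hy
    simp only [Option.mem_def, Option.some_inj] at hx hy
    subst hx; subst hy
    simpa using hadj
  · have h1 : List.Sublist (l.drop j) (l.drop (i+1)) := by
      have heq : l.drop j = List.drop (j - (i+1)) (l.drop (i+1)) := by
        rw [List.drop_drop]; congr 1; omega
      rw [heq]; exact List.drop_sublist _ _
    have h2 : List.Sublist (l.take (i+1) ++ l.drop j) (l.take (i+1) ++ l.drop (i+1)) :=
      (List.append_sublist_append_left _).mpr h1
    rw [List.take_append_drop] at h2
    exact h2.nodup hnd
  · rw [List.head?_append_of_ne_nil]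
    · rw [List.head?_take]; simp
    · exact List.length_pos_iff.mp (by rw [List.length_take]; omega)
  · rw [List.getLast?_append_of_ne_nil]
    · exact getLast?_drop hj
    · exact List.length_pos_iff.mp (by rw [List.length_drop]; omega)
  · intro x hx
    rcases List.mem_append.mp hx with h | h
    · exact List.take_subset _ _ h
    · exact List.drop_subset _ _ h
  · rw [List.length_append, List.length_take, List.length_drop]
    omega

/-- From a nodup chain, extract a chord-free (induced) path with the same endpoints. -/
lemma exists_IPl_of_nodup_chain : ∀ (n : ℕ) (l : List V), l.length ≤ n →
    l.Chain' G.Adj → l.Nodup →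
    ∃ l', IPl G l' ∧ l'.head? = l.head? ∧ l'.getLast? = l.getLast? ∧ ∀ x ∈ l', x ∈ l := by
  intro n
  induction n with
  | zero =>
    intro l hl hc hnd
    exact ⟨l, ⟨hc, hnd, fun x hx => by
      have : l = [] := List.length_eq_zero_iff.mp (by omega)
      simp [this] at hx⟩, rfl, rfl, fun x hx => hx⟩
  | succ n ih =>
    intro l hl hc hnd
    by_cases hch : ∀ x ∈ l, ∀ y ∈ l, G.Adj x y → consecIn l x y
    · exact ⟨l, ⟨hc, hnd, hch⟩, rfl, rfl, fun x hx => hx⟩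
    · push_neg at hch
      obtain ⟨x, hx, y, hy, hadj, hncons⟩ := hch
      obtain ⟨i, hi, rfl⟩ := List.mem_iff_getElem.mp hx
      obtain ⟨j, hj, rfl⟩ := List.mem_iff_getElem.mp hy
      have hij : i ≠ j := by rintro rfl; exact G.irrefl hadj
      -- non-consecutive
      have hsep : i + 2 ≤ j ∨ j + 2 ≤ i := by
        rcases Nat.lt_or_ge i j with h | h
        · rcases Nat.lt_or_ge (i+1) j with h' | h'
          · left; omega
          · exfalso; have : j = i + 1 := by omega
            subst this
            exact hncons (Or.inl (infix_pair_of_getElem l i hj))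
        · rcases Nat.lt_or_ge (j+1) i with h' | h'
          · right; omega
          · exfalso
            have : i = j + 1 := by omega
            subst this
            exact hncons (Or.inr (infix_pair_of_getElem l j hi))
      have key : ∀ i' j' (hi' : i' < l.length) (hj' : j' < l.length), i' + 2 ≤ j' →
          G.Adj l[i'] l[j'] →
          ∃ l', IPl G l' ∧ l'.head? = l.head? ∧ l'.getLast? = l.getLast? ∧ ∀ x ∈ l', x ∈ l := by
        intro i' j' hi' hj' hsep' hadj'
        obtain ⟨l2, h2c, h2nd, h2h, h2l, h2sub, h2len⟩ :=
          splice_chord hc hnd hi' hj' hsep' hadj'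
        obtain ⟨l', hip, hh, hlast, hsub⟩ := ih l2 (by omega) h2c h2nd
        exact ⟨l', hip, hh.trans h2h, hlast.trans h2l, fun z hz => h2sub z (hsub z hz)⟩
      rcases hsep with h | h
      · exact key i j hi hj h hadj
      · exact key j i hj hi h hadj.symm

lemma getElem_pos_of_infix_pair {x y : V} {l : List V} (h : [x, y] <:+: l) :
    ∃ k, ∃ hk : k + 1 < l.length, l[k] = x ∧ l[k+1] = y := by
  obtain ⟨s, t, rfl⟩ := h
  have hlen : s.length + 1 < (s ++ [x, y] ++ t).length := by simp
  refine ⟨s.length, hlen, ?_, ?_⟩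
  · rw [List.getElem_append_left (by simp)]
    rw [List.getElem_append_right (le_refl _)]
    simp
  · rw [List.getElem_append_left (by simp)]
    rw [List.getElem_append_right (by omega)]
    have : s.length + 1 - s.length = 1 := by omega
    simp [this]


lemma chain'_adj_getElem {R : V → V → Prop} {l : List V} (h : l.Chain' R) {k : ℕ}
    (hk : k + 1 < l.length) : R l[k] l[k+1] := by
  have := List.isChain_iff_getElem.mp h k (by omega)
  simpa using this


lemma getElem_eq_of_nodup {l : List V} (h : l.Nodup) {i j : ℕ} (hi : i < l.length)
    (hj : j < l.length) (he : l[i] = l[j]) : i = j :=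
  (List.Nodup.getElem_inj_iff h).mp he


lemma mem_of_getLast?_eq {l : List V} {a : V} (h : l.getLast? = some a) : a ∈ l := by
  cases l with
  | nil => simp at h
  | cons b t =>
    rw [List.getLast?_eq_getLast (by simp)] at h
    rw [← Option.some_inj.mp h]
    exact List.getLast_mem _


lemma mem_of_head?_eq {l : List V} {a : V} (h : l.head? = some a) : a ∈ l := by
  cases l with
  | nil => simp at h
  | cons b t => simp at h; simp [h]

lemma IPl_not_adj {l : List V} (hip : IPl G l) {i j : ℕ} (hi : i < l.length)
    (hj : j < l.length) (hij : i + 2 ≤ j) : ¬ G.Adj l[i] l[j] := by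
  intro hadj
  rcases hip.2.2 _ (List.getElem_mem hi) _ (List.getElem_mem hj) hadj with h | h <;>
    obtain ⟨k, hk, h1, h2⟩ := getElem_pos_of_infix_pair h
  · have e1 := getElem_eq_of_nodup hip.2.1 (by omega) hi h1
    have e2 := getElem_eq_of_nodup hip.2.1 hk hj h2
    omega
  · have e1 := getElem_eq_of_nodup hip.2.1 (by omega) hj h1
    have e2 := getElem_eq_of_nodup hip.2.1 hk hi h2
    omega


lemma exists_walk_of_chain {l : List V} {u z : V} (hc : l.Chain' G.Adj)
    (hh : l.head? = some u) (hl : l.getLast? = some z) :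
    ∃ w : G.Walk u z, w.support = l := by
  induction l generalizing u with
  | nil => simp at hh
  | cons a t ih =>
    simp only [List.head?_cons, Option.some_inj] at hh
    subst hh
    cases t with
    | nil =>
      simp only [List.getLast?_singleton, Option.some_inj] at hl
      subst hl
      exact ⟨Walk.nil, rfl⟩
    | cons b t' =>
      obtain ⟨hadj, hc'⟩ := List.isChain_cons_cons.mp hc
      rw [List.getLast?_cons_cons] at hl
      obtain ⟨w', hw'⟩ := ih hc' rfl hl
      exact ⟨Walk.cons hadj w', by simp [hw']⟩


lemma walk_of_IPl {l : List V} {u z : V} (hip : IPl G l) (hh : l.head? = some u)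
    (hl : l.getLast? = some z) :
    ∃ w : G.Walk u z, w.support = l ∧ IsInducedPathW G w := by
  obtain ⟨w, hw⟩ := exists_walk_of_chain hip.1 hh hl
  refine ⟨w, hw, ?_, ?_⟩
  · rw [Walk.isPath_def, hw]; exact hip.2.1
  · rw [hw]; exact hip.2.2


lemma IPl_of_walk {u z : V} {w : G.Walk u z} (h : IsInducedPathW G w) : IPl G w.support :=
  ⟨w.isChain_adj_support, (Walk.isPath_def w).mp h.1, h.2⟩

lemma support_head?_eq (w : G.Walk u v) : w.support.head? = some u := by
  cases w <;> simp

lemma support_getLast?_eq (w : G.Walk u v) : w.support.getLast? = some v := by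
  induction w with
  | nil => simp
  | @cons a b c h p ih =>
    rw [Walk.support_cons]
    cases hp : p.support with
    | nil => exact absurd hp p.support_ne_nil
    | cons x t => rw [List.getLast?_cons_cons, ← hp, ih]


end Helpers

namespace SReach
variable {G : SimpleGraph V} {X Y : Set V} {u v w : V}

lemma refl (hu : u ∈ X) : SReach G X u u :=
  ⟨[u], List.isChain_singleton u, rfl, rfl, by simpa using hu⟩

lemma of_adj (h : G.Adj u v) (hu : u ∈ X) (hv : v ∈ X) : SReach G X u v :=
  ⟨[u, v], by simp [List.Chain', h], rfl, rfl, by simp [hu, hv]⟩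

lemma mem_left (h : SReach G X u v) : u ∈ X := by
  obtain ⟨l, _, hh, _, hm⟩ := h
  exact hm u (mem_of_head?_eq hh)

lemma mem_right (h : SReach G X u v) : v ∈ X := by
  obtain ⟨l, _, _, hl, hm⟩ := h
  exact hm v (mem_of_getLast?_eq hl)

lemma symm (h : SReach G X u v) : SReach G X v u := by
  obtain ⟨l, hc, hh, hl, hm⟩ := h
  refine ⟨l.reverse, ?_, ?_, ?_, ?_⟩
  · exact (List.isChain_reverse).mpr (List.IsChain.imp (fun a b hab => hab.symm) hc)
  · rw [List.head?_reverse]; exact hl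
  · rw [List.getLast?_reverse]; exact hh
  · intro x hx; exact hm x (List.mem_reverse.mp hx)

lemma trans (h1 : SReach G X u v) (h2 : SReach G X v w) : SReach G X u w := by
  obtain ⟨l1, hc1, hh1, hl1, hm1⟩ := h1
  obtain ⟨l2, hc2, hh2, hl2, hm2⟩ := h2
  cases l2 with
  | nil => simp at hh2
  | cons a t =>
    simp only [List.head?_cons, Option.some_inj] at hh2
    subst hh2
    cases t with
    | nil =>
      simp only [List.getLast?_singleton, Option.some_inj] at hl2
      subst hl2
      exact ⟨l1, hc1, hh1, hl1, hm1⟩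
    | cons b t' =>
      refine ⟨l1 ++ b :: t', ?_, ?_, ?_, ?_⟩
      · apply List.isChain_append.mpr
        refine ⟨hc1, (List.isChain_cons_cons.mp hc2).2, ?_⟩
        intro x hx y hy
        rw [hl1] at hx
        simp only [Option.mem_def, Option.some_inj, List.head?_cons] at hx hy
        subst hx; subst hy
        exact (List.isChain_cons_cons.mp hc2).1
      · rw [List.head?_append_of_ne_nil _ (by rintro rfl; simp at hh1)]
        exact hh1
      · rw [List.getLast?_append_of_ne_nil _ (by simp)]
        rw [List.getLast?_cons_cons] at hl2
        exact hl2
      · intro x hx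
        rcases List.mem_append.mp hx with h | h
        · exact hm1 x h
        · exact hm2 x (List.mem_cons_of_mem _ h)

lemma mono (hXY : X ⊆ Y) (h : SReach G X u v) : SReach G Y u v := by
  obtain ⟨l, hc, hh, hl, hm⟩ := h
  exact ⟨l, hc, hh, hl, fun x hx => hXY (hm x hx)⟩

end SReach

section Helpers2
variable {G : SimpleGraph V} {X : Set V} {u v w : V}

lemma GChain.mem_reach : ∀ {l : List V} {u : V}, GChain G X u v l → ∀ x ∈ l, SReach G X u x := by
  intro l
  induction l with
  | nil => intro u h x hx; simp at hx
  | cons a t ih =>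
    intro u h x hx
    obtain ⟨hc, hh, hl, hm⟩ := h
    simp only [List.head?_cons, Option.some_inj] at hh
    subst hh
    rcases List.mem_cons.mp hx with hxa | hx'
    · subst hxa; exact SReach.refl (hm _ (List.mem_cons_self))
    · cases t with
      | nil => simp at hx'
      | cons b t' =>
        have hadj : G.Adj a b := (List.isChain_cons_cons.mp hc).1
        have hub : SReach G X a b :=
          SReach.of_adj hadj (hm a (by simp)) (hm b (by simp))
        have ht : GChain G X b v (b :: t') := by
          refine ⟨(List.isChain_cons_cons.mp hc).2, rfl, ?_, ?_⟩
          · rw [List.getLast?_cons_cons] at hl; exact hl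
          · intro y hy; exact hm y (List.mem_cons_of_mem _ hy)
        exact hub.trans (ih ht x hx')

/-- Shortest-path refinement: reachability within `X` yields an induced path within `X`. -/
lemma SReach.exists_IPl (h : SReach G X u v) :
    ∃ l, IPl G l ∧ GChain G X u v l := by
  classical
  obtain ⟨l0, hc0, hh0, hl0, hm0⟩ := h
  obtain ⟨w0, hw0⟩ := exists_walk_of_chain hc0 hh0 hl0
  set w1 := w0.bypass with hw1
  have hnd : w1.support.Nodup := (Walk.isPath_def _).mp w0.bypass_isPath
  have hsub : ∀ x ∈ w1.support, x ∈ X := by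
    intro x hx
    exact hm0 x (hw0 ▸ w0.support_bypass_subset hx)
  obtain ⟨l, hip, hh, hl, hsub'⟩ :=
    exists_IPl_of_nodup_chain w1.support.length w1.support le_rfl
      w1.isChain_adj_support hnd
  refine ⟨l, hip, hip.1, ?_, ?_, fun x hx => hsub x (hsub' x hx)⟩
  · rw [hh, support_head?_eq]
  · rw [hl, support_getLast?_eq]

end Helpers2


section ChullBasics
variable {G : SimpleGraph V} {P : ∀ ⦃u v : V⦄, G.Walk u v → Prop} {S T : Set V}

lemma subset_chull (Cvx : Set V → Prop) (S : Set V) : S ⊆ chull Cvx S :=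
  fun x hx => Set.mem_sInter.mpr fun _ hT => hT.1 hx

lemma chull_min {Cvx : Set V → Prop} (hST : S ⊆ T) (hT : Cvx T) : chull Cvx S ⊆ T :=
  fun x hx => Set.mem_sInter.mp hx T ⟨hST, hT⟩

lemma chull_convex : PConvex G P (chull (PConvex G P) S) := by
  intro u v hu hv w hw x hx
  refine Set.mem_sInter.mpr fun T hT => ?_
  exact hT.2 (Set.mem_sInter.mp hu T hT) (Set.mem_sInter.mp hv T hT) w hw x hx

lemma pconvex_empty : PConvex G P ∅ := fun u _ hu => absurd hu (Set.notMem_empty u)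

lemma chull_empty : chull (PConvex G P) ∅ = ∅ :=
  Set.eq_empty_of_subset_empty (chull_min (Set.Subset.refl _) pconvex_empty)

end ChullBasics

/-- `v` is simplicial within `S`: its neighbours inside `S` are pairwise adjacent. -/
def Simp (G : SimpleGraph V) (S : Set V) (v : V) : Prop :=
  v ∈ S ∧ ∀ p ∈ S, ∀ q ∈ S, G.Adj v p → G.Adj v q → p ≠ q → G.Adj p q

section ExtremePts
variable {G : SimpleGraph V} {S : Set V} {u v : V}

lemma getElem_zero_of_head? {l : List V} {a : V} (h : l.head? = some a) (h0 : 0 < l.length) :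
    l[0] = a := by
  cases l with
  | nil => simp at h0
  | cons b t => simpa using h

lemma getElem_last_of_getLast? {l : List V} {a : V} (h : l.getLast? = some a)
    (h0 : 0 < l.length) : l[l.length - 1] = a := by
  rw [List.getLast?_eq_getElem?, List.getElem?_eq_getElem (by omega)] at h
  exact Option.some_inj.mp h

lemma simp_not_mem_support (hconv : PConvex G (fun _ _ w => IsInducedPathW G w) S)
    (hs : Simp G S v) {a b : V} (ha : a ∈ S) (hb : b ∈ S) (hav : a ≠ v) (hbv : b ≠ v)
    (w : G.Walk a b) (hw : IsInducedPathW G w) : v ∉ w.support := by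
  intro hv
  have hip : IPl G w.support := IPl_of_walk hw
  obtain ⟨i, hi, hveq⟩ := List.mem_iff_getElem.mp hv
  have h0 : w.support[0]'(by omega) = a :=
    getElem_zero_of_head? (support_head?_eq w) (by omega)
  have hlast : w.support[w.support.length - 1]'(by omega) = b :=
    getElem_last_of_getLast? (support_getLast?_eq w) (by omega)
  have hi0 : i ≠ 0 := by
    rintro rfl
    exact hav (by rw [← h0, hveq])
  have hilast : i ≠ w.support.length - 1 := by
    rintro rfl
    exact hbv (by rw [← hlast, hveq])
  obtain ⟨i', rfl⟩ : ∃ i', i = i' + 1 := ⟨i - 1, by omega⟩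
  have hi2 : i' + 2 < w.support.length := by omega
  have hadj1 : G.Adj (w.support[i']'(by omega)) v := by
    rw [← hveq]; exact chain'_adj_getElem hip.1 (by omega)
  have hadj2 : G.Adj v (w.support[i'+2]'(by omega)) := by
    rw [← hveq]
    exact chain'_adj_getElem hip.1 (by omega)
  have hmem1 : w.support[i']'(by omega) ∈ S :=
    hconv ha hb w hw _ (List.getElem_mem _)
  have hmem2 : w.support[i'+2]'(by omega) ∈ S :=
    hconv ha hb w hw _ (List.getElem_mem _)
  have hne : w.support[i']'(by omega) ≠ w.support[i'+2]'(by omega) := by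
    intro h
    have := getElem_eq_of_nodup hip.2.1 (by omega) (by omega) h
    omega
  have := hs.2 _ hmem1 _ hmem2 hadj1.symm hadj2 hne
  exact IPl_not_adj hip (by omega) hi2 (by omega) this

lemma simp_mem_extreme (hconv : PConvex G (fun _ _ w => IsInducedPathW G w) S)
    (hs : Simp G S v) :
    v ∈ extremeSet (PConvex G fun _ _ w => IsInducedPathW G w) S := by
  refine ⟨hs.1, ?_⟩
  intro a b ha hb w hw x hx
  have hnv : v ∉ w.support := simp_not_mem_support hconv hs ha.1 hb.1 ha.2 hb.2 w hw
  refine ⟨hconv ha.1 hb.1 w hw x hx, ?_⟩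
  intro hxv
  rw [Set.mem_singleton_iff.mp hxv] at hx
  exact hnv hx

lemma IPl_triple {p x q : V} (h1 : G.Adj p x) (h2 : G.Adj x q) (h3 : ¬ G.Adj p q)
    (hpq : p ≠ q) : IPl G [p, x, q] := by
  refine ⟨by simp [List.Chain', h1, h2], by simp [h1.ne, h2.ne, hpq], ?_⟩
  have hinf1 : [p, x] <:+: [p, x, q] := ⟨[], [q], rfl⟩
  have hinf2 : [x, q] <:+: [p, x, q] := ⟨[p], [], by simp⟩
  intro a ha b hb hab
  simp only [List.mem_cons, List.not_mem_nil, or_false] at ha hb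
  rcases ha with rfl | rfl | rfl <;> rcases hb with rfl | rfl | rfl
  · exact absurd hab (G.irrefl)
  · exact Or.inl hinf1
  · exact absurd hab h3
  · exact Or.inr hinf1
  · exact absurd hab (G.irrefl)
  · exact Or.inl hinf2
  · exact absurd hab (fun h => h3 h.symm)
  · exact Or.inr hinf2
  · exact absurd hab (G.irrefl)

end ExtremePts

section CycExt
variable {G : SimpleGraph V}

lemma getElem_congr_idx' {l : List V} {i j : ℕ} (h : i = j) {hi : i < l.length} :
    l[i] = l[j]'(h ▸ hi) := by subst h; rfl

lemma cyc_getElem_eq {l : List V} (hnd : l.tail.Nodup) (h2 : 2 ≤ l.length)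
    (hcl : l[0]'(by omega) = l[l.length - 1]'(by omega)) {i j : ℕ} (hi : i < l.length)
    (hj : j < l.length) (he : l[i] = l[j]) :
    i = j ∨ (i = 0 ∧ j = l.length - 1) ∨ (j = 0 ∧ i = l.length - 1) := by
  have key : ∀ {a b : ℕ} (ha : a < l.length) (hb : b < l.length), 1 ≤ a → 1 ≤ b →
      l[a] = l[b] → a = b := by
    intro a b ha hb h1a h1b hab
    obtain ⟨a', rfl⟩ : ∃ a', a = a' + 1 := ⟨a - 1, by omega⟩
    obtain ⟨b', rfl⟩ : ∃ b', b = b' + 1 := ⟨b - 1, by omega⟩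
    have hta : a' < l.tail.length := by rw [List.length_tail]; omega
    have htb : b' < l.tail.length := by rw [List.length_tail]; omega
    have : l.tail[a'] = l.tail[b'] := by
      rw [List.getElem_tail, List.getElem_tail]; exact hab
    have := getElem_eq_of_nodup hnd hta htb this
    omega
  rcases Nat.eq_zero_or_pos i with rfl | hipos
  · rcases Nat.eq_zero_or_pos j with rfl | hjpos
    · exact Or.inl rfl
    · have : l[j] = l[l.length - 1]'(by omega) := by rw [← he, hcl]
      have := key hj (by omega) (by omega) (by omega) this
      exact Or.inr (Or.inl ⟨rfl, this⟩)
  · rcases Nat.eq_zero_or_pos j with rfl | hjpos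
    · have : l[i] = l[l.length - 1]'(by omega) := by rw [he, hcl]
      have := key hi (by omega) (by omega) (by omega) this
      exact Or.inr (Or.inr ⟨rfl, this⟩)
    · exact Or.inl (key hi hj hipos hjpos he)

lemma cyc_two_nbrs {u : V} {w : G.Walk u u} (hw : IsInducedCycleW G w) (hlen : 4 ≤ w.length)
    {x : V} (hx : x ∈ w.support) :
    ∃ p q, p ∈ w.support ∧ q ∈ w.support ∧ G.Adj p x ∧ G.Adj x q ∧ p ≠ q ∧ ¬ G.Adj p q := by
  have hn : w.support.length = w.length + 1 := w.length_support
  have hn5 : 5 ≤ w.support.length := by omega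
  have hnd : w.support.tail.Nodup := hw.1.support_nodup
  have hchain := w.isChain_adj_support
  have h0 : w.support[0]'(by omega) = u :=
    getElem_zero_of_head? (support_head?_eq w) (by omega)
  have hlast : w.support[w.support.length - 1]'(by omega) = u :=
    getElem_last_of_getLast? (support_getLast?_eq w) (by omega)
  have hcl : w.support[0]'(by omega) = w.support[w.support.length - 1]'(by omega) := by
    rw [h0, hlast]
  have hne : ∀ (i j : ℕ) (hi : i < w.support.length) (hj : j < w.support.length),
      w.support[i] = w.support[j] →
      i = j ∨ (i = 0 ∧ j = w.support.length - 1) ∨ (j = 0 ∧ i = w.support.length - 1) :=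
    fun i j hi hj he => cyc_getElem_eq hnd (by omega) hcl hi hj he
  have hpos : ∀ {p q : V}, p ∈ w.support → q ∈ w.support → G.Adj p q →
      ∃ k, ∃ hk : k + 1 < w.support.length,
        (w.support[k]'(by omega) = p ∧ w.support[k+1] = q) ∨
        (w.support[k]'(by omega) = q ∧ w.support[k+1] = p) := by
    intro p q hp hq hadj
    rcases hw.2 p hp q hq hadj with h | h <;>
      obtain ⟨k, hk, h1, h2⟩ := getElem_pos_of_infix_pair h
    · exact ⟨k, hk, Or.inl ⟨h1, h2⟩⟩
    · exact ⟨k, hk, Or.inr ⟨h1, h2⟩⟩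
  obtain ⟨i0, hi0, hxeq⟩ := List.mem_iff_getElem.mp hx
  obtain ⟨i, hilt, hxi⟩ : ∃ i, ∃ _ : i + 1 < w.support.length,
      w.support[i]'(by omega) = x := by
    by_cases h : i0 = w.support.length - 1
    · refine ⟨0, by omega, ?_⟩
      rw [hcl]
      exact (getElem_congr_idx' (by omega)).trans hxeq
    · exact ⟨i0, by omega, hxeq⟩
  rcases Nat.eq_zero_or_pos i with rfl | hipos
  · refine ⟨w.support[w.support.length - 2]'(by omega), w.support[1]'(by omega),
      List.getElem_mem _, List.getElem_mem _, ?_, ?_, ?_, ?_⟩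
    · have h1 := chain'_adj_getElem hchain (k := w.support.length - 2) (by omega)
      have h21 : w.support[w.support.length - 2 + 1]'(by omega) =
          w.support[w.support.length - 1]'(by omega) :=
        getElem_congr_idx' (by omega)
      rw [h21] at h1
      have hval : w.support[w.support.length - 1]'(by omega) = x := by
        rw [← hcl]; exact hxi
      rwa [hval] at h1
    · have h1 := chain'_adj_getElem hchain (k := 0) (by omega)
      rwa [hxi] at h1
    · intro h
      rcases hne _ _ (by omega) (by omega) h with e | e | e <;> omega
    · intro hadj
      obtain ⟨k, hk, hor⟩ := hpos (List.getElem_mem _) (List.getElem_mem _) hadj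
      rcases hor with ⟨e1, e2⟩ | ⟨e1, e2⟩
      · rcases hne _ _ (by omega) (by omega) e1 with f1 | f1 | f1 <;>
          rcases hne _ _ (by omega) (by omega) e2 with f2 | f2 | f2 <;> omega
      · rcases hne _ _ (by omega) (by omega) e1 with f1 | f1 | f1 <;>
          rcases hne _ _ (by omega) (by omega) e2 with f2 | f2 | f2 <;> omega
  · obtain ⟨i', rfl⟩ : ∃ i', i = i' + 1 := ⟨i - 1, by omega⟩
    refine ⟨w.support[i']'(by omega), w.support[i' + 2]'(by omega),
      List.getElem_mem _, List.getElem_mem _, ?_, ?_, ?_, ?_⟩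
    · have h1 := chain'_adj_getElem hchain (k := i') (by omega)
      rwa [hxi] at h1
    · have h1 := chain'_adj_getElem hchain (k := i' + 1) (by omega)
      rwa [hxi] at h1
    · intro h
      rcases hne _ _ (by omega) (by omega) h with e | e | e <;> omega
    · intro hadj
      obtain ⟨k, hk, hor⟩ := hpos (List.getElem_mem _) (List.getElem_mem _) hadj
      rcases hor with ⟨e1, e2⟩ | ⟨e1, e2⟩
      · rcases hne _ _ (by omega) (by omega) e1 with f1 | f1 | f1 <;>
          rcases hne _ _ (by omega) (by omega) e2 with f2 | f2 | f2 <;> omega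
      · rcases hne _ _ (by omega) (by omega) e1 with f1 | f1 | f1 <;>
          rcases hne _ _ (by omega) (by omega) e2 with f2 | f2 | f2 <;> omega

/-- Forward direction: a monophonic convex geometry is chordal. -/
lemma convexGeometry_chordal
    (hCG : IsConvexGeometry (PConvex G fun _ _ w => IsInducedPathW G w)) : Chordal G := by
  rintro ⟨u, w, hw, hlen⟩
  set Cvx := PConvex G fun _ _ w => IsInducedPathW G w with hCvx
  set Csupp : Set V := {x | x ∈ w.support} with hCsupp
  set S := chull Cvx Csupp with hS
  have hSconv : Cvx S := chull_convex
  have hES : extremeSet Cvx S = ∅ := by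
    rw [Set.eq_empty_iff_forall_notMem]
    rintro x ⟨hxS, hxcvx⟩
    by_cases hxC : x ∈ w.support
    · obtain ⟨p, q, hp, hq, hpx, hxq, hpq, hnadj⟩ := cyc_two_nbrs hw hlen hxC
      have hip : IPl G [p, x, q] := IPl_triple hpx hxq hnadj hpq
      obtain ⟨w2, hw2sup, hw2⟩ := walk_of_IPl (z := q) hip rfl (by simp)
      have hpS : p ∈ S := subset_chull Cvx Csupp hp
      have hqS : q ∈ S := subset_chull Cvx Csupp hq
      have hxm : x ∈ S \ {x} := by
        refine hxcvx (u := p) (v := q) ⟨hpS, by simp [hpx.ne]⟩ ⟨hqS, by simp [hxq.ne']⟩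
          w2 hw2 x (by rw [hw2sup]; simp)
      exact hxm.2 rfl
    · have hsub : Csupp ⊆ S \ {x} := fun c hc =>
        ⟨subset_chull Cvx Csupp hc, by simp; rintro rfl; exact hxC hc⟩
      exact (chull_min hsub hxcvx hxS).2 rfl
  have hSeq := hCG S hSconv
  rw [hES, chull_empty] at hSeq
  have hu : u ∈ S := subset_chull Cvx Csupp w.start_mem_support
  rw [hSeq] at hu
  exact hu

end CycExt

section Separators
variable {G : SimpleGraph V} {S C : Set V} {a b : V}

/-- `C` separates `a` from `b` within `S`. -/
def SepIn (G : SimpleGraph V) (S C : Set V) (a b : V) : Prop := ¬ SReach G (S \ C) a b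

lemma SepIn.symm (h : SepIn G S C a b) : SepIn G S C b a := fun h' => h h'.symm

lemma comp_step {X : Set V} {a z w : V} (hz : SReach G X a z) (hadj : G.Adj z w)
    (hw : w ∈ X) : SReach G X a w :=
  hz.trans (SReach.of_adj hadj hz.mem_right hw)

lemma first_split {c : V} {l : List V} (h : c ∈ l) :
    ∃ l₁ l₂, l = l₁ ++ c :: l₂ ∧ c ∉ l₁ := by
  induction l with
  | nil => simp at h
  | cons a t ih =>
    by_cases hac : a = c
    · exact ⟨[], t, by rw [hac]; rfl, by simp⟩
    · have hct : c ∈ t := by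
        rcases List.mem_cons.mp h with h' | h'
        · exact absurd h'.symm hac
        · exact h'
      obtain ⟨l₁, l₂, rfl, hc1⟩ := ih hct
      refine ⟨a :: l₁, l₂, rfl, ?_⟩
      simp only [List.mem_cons, not_or]
      exact ⟨fun h' => hac h'.symm, hc1⟩

lemma exists_min_sep [Fintype V] (hab : a ≠ b) (hnadj : ¬ G.Adj a b)
    (haS : a ∈ S) (hbS : b ∈ S) :
    ∃ C : Set V, C ⊆ S \ {a, b} ∧ SepIn G S C a b ∧
      ∀ c ∈ C, ¬ SepIn G S (C \ {c}) a b := by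
  classical
  have hC0 : (S \ {a, b} : Set V) ⊆ S \ {a, b} ∧ SepIn G S (S \ {a, b}) a b := by
    refine ⟨Set.Subset.refl _, ?_⟩
    rintro ⟨l, hchain, hh, hl, hm⟩
    have hmem : ∀ x ∈ l, x = a ∨ x = b := by
      intro x hx
      have := hm x hx
      rcases this with ⟨hxS, hxn⟩
      by_contra hcon
      push_neg at hcon
      exact hxn ⟨hxS, by simp [hcon.1, hcon.2]⟩
    cases l with
    | nil => simp at hh
    | cons a0 t =>
      simp only [List.head?_cons, Option.some_inj] at hh
      subst hh
      cases t with
      | nil =>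
        simp only [List.getLast?_singleton, Option.some_inj] at hl
        exact hab hl
      | cons c t' =>
        have hadj : G.Adj a0 c := (List.isChain_cons_cons.mp hchain).1
        rcases hmem c (by simp) with rfl | rfl
        · exact G.irrefl hadj
        · exact hnadj hadj
  have hex : ∃ n, ∃ D : Set V, (D ⊆ S \ {a, b} ∧ SepIn G S D a b) ∧ D.ncard = n :=
    ⟨_, _, hC0, rfl⟩
  obtain ⟨D, ⟨hD1, hD2⟩, hDcard⟩ := Nat.find_spec hex
  refine ⟨D, hD1, hD2, ?_⟩
  intro c hc hsep'
  have hlt : (D \ {c}).ncard < Nat.find hex := by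
    rw [← hDcard]
    exact Set.ncard_lt_ncard (by
      constructor
      · exact Set.diff_subset
      · intro hsub
        exact (hsub hc).2 rfl) (Set.toFinite D)
  exact Nat.find_min hex hlt ⟨D \ {c}, ⟨(Set.diff_subset).trans hD1, hsep'⟩, rfl⟩

lemma sep_nbr (hsep : SepIn G S C a b) (haC : a ∉ C)
    {c : V} (hc : c ∈ C) (hnot : ¬ SepIn G S (C \ {c}) a b) :
    ∃ p, SReach G (S \ C) a p ∧ G.Adj p c := by
  obtain ⟨l, hchain, hh, hl, hm⟩ := not_not.mp hnot
  have hcl : c ∈ l := by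
    by_contra hc'
    refine hsep ⟨l, hchain, hh, hl, fun x hx => ?_⟩
    obtain ⟨hxS, hxn⟩ := hm x hx
    refine ⟨hxS, fun hxC => hxn ⟨hxC, ?_⟩⟩
    simp only [Set.mem_singleton_iff]
    rintro rfl
    exact hc' hx
  obtain ⟨l₁, l₂, rfl, hcnot⟩ := first_split hcl
  have hl₁ne : l₁ ≠ [] := by
    rintro rfl
    simp only [List.nil_append, List.head?_cons, Option.some_inj] at hh
    exact haC (hh ▸ hc)
  obtain ⟨hch1, hch2, hjun⟩ := List.isChain_append.mp hchain
  refine ⟨l₁.getLast hl₁ne, ⟨l₁, hch1, ?_, List.getLast?_eq_getLast _, ?_⟩, ?_⟩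
  · rw [List.head?_append_of_ne_nil _ hl₁ne] at hh
    exact hh
  · intro x hx
    obtain ⟨hxS, hxn⟩ := hm x (by simp [hx])
    refine ⟨hxS, fun hxC => ?_⟩
    have hxc : x ≠ c := fun h => hcnot (h ▸ hx)
    exact hxn ⟨hxC, by simpa using hxc⟩
  · exact hjun _ (List.getLast?_eq_getLast _) c rfl

end Separators

section Cyc
variable {G : SimpleGraph V}

lemma infix_append_left {l₁ l₂ l₀ : List V} (h : l₁ <:+: l₂) : l₁ <:+: l₀ ++ l₂ := by
  obtain ⟨s, t, rfl⟩ := h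
  exact ⟨l₀ ++ s, t, by simp⟩

lemma infix_append_right {l₁ l₂ l₀ : List V} (h : l₁ <:+: l₂) : l₁ <:+: l₂ ++ l₀ := by
  obtain ⟨s, t, rfl⟩ := h
  exact ⟨s, t ++ l₀, by simp⟩

lemma chain_min_len3 {l : List V} (hc : l.Chain' G.Adj) {x y : V} (hh : l.head? = some x)
    (hl : l.getLast? = some y) (hxy : x ≠ y) (hnadj : ¬ G.Adj x y) : 3 ≤ l.length := by
  rcases l with _ | ⟨a0, _ | ⟨a1, _ | ⟨a2, t⟩⟩⟩
  · simp at hh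
  · simp only [List.head?_cons, Option.some_inj] at hh
    simp only [List.getLast?_singleton, Option.some_inj] at hl
    exact absurd (by rw [← hh, hl]) hxy
  · simp only [List.head?_cons, Option.some_inj] at hh
    have hl' : a1 = y := by simpa using hl
    have hadj := (List.isChain_cons_cons.mp hc).1
    rw [hh, hl'] at hadj
    exact absurd hadj hnadj
  · simp only [List.length_cons]
    omega

lemma no_two_disjoint_induced_paths (hch : Chordal G) {x y : V} {PA PB : List V} {A B : Set V}
    (hipA : IPl G PA) (hipB : IPl G PB)
    (hhA : PA.head? = some x) (hlA : PA.getLast? = some y)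
    (hhB : PB.head? = some x) (hlB : PB.getLast? = some y)
    (hmA : ∀ z ∈ PA, z = x ∨ z = y ∨ z ∈ A) (hmB : ∀ z ∈ PB, z = x ∨ z = y ∨ z ∈ B)
    (hxy : x ≠ y) (hnadj : ¬ G.Adj x y)
    (hxA : x ∉ A) (hyA : y ∉ A) (hxB : x ∉ B) (hyB : y ∉ B)
    (hABdisj : ∀ z, z ∈ A → z ∈ B → False)
    (hABadj : ∀ p ∈ A, ∀ q ∈ B, ¬ G.Adj p q) : False := by
  obtain ⟨WA, hWAs, hWA⟩ := walk_of_IPl (z := y) hipA hhA hlA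
  obtain ⟨WB, hWBs, hWB⟩ := walk_of_IPl (z := y) hipB hhB hlB
  have hPAPB : ∀ z, z ∈ PA → z ∈ PB → z = x ∨ z = y := by
    intro z h1 h2
    rcases hmA z h1 with rfl | rfl | hzA
    · exact Or.inl rfl
    · exact Or.inr rfl
    · rcases hmB z h2 with rfl | rfl | hzB
      · exact absurd hzA hxA
      · exact absurd hzA hyA
      · exact (hABdisj z hzA hzB).elim
  set w := WA.append WB.reverse with hwdef
  have hsup : w.support = PA ++ PB.reverse.tail := by
    rw [hwdef, Walk.support_append, Walk.support_reverse, hWAs, hWBs]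
  have h3A : 3 ≤ PA.length := chain_min_len3 hipA.1 hhA hlA hxy hnadj
  have h3B : 3 ≤ PB.length := chain_min_len3 hipB.1 hhB hlB hxy hnadj
  have hlenA : PA.length = WA.length + 1 := by rw [← hWAs]; exact WA.length_support
  have hlenB : PB.length = WB.length + 1 := by rw [← hWBs]; exact WB.length_support
  have hwlen : w.length = WA.length + WB.length := by
    rw [hwdef, Walk.length_append, Walk.length_reverse]
  have hsupmem : ∀ z ∈ w.support, z ∈ PA ∨ z ∈ PB := by
    intro z hz
    rw [hsup] at hz
    rcases List.mem_append.mp hz with h | h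
    · exact Or.inl h
    · exact Or.inr (List.mem_reverse.mp ((List.tail_sublist _).subset h))
  have hPBrev : PB.reverse = y :: PB.reverse.tail := by
    symm
    exact List.cons_head?_tail (Option.mem_def.mpr (by rw [List.head?_reverse]; exact hlB))
  have hPAne : PA ≠ [] := by rintro rfl; simp at hhA
  have hPAy : PA.dropLast ++ [y] = PA := by
    have hgl : PA.getLast hPAne = y := by
      rw [List.getLast?_eq_getLast hPAne] at hlA
      exact Option.some_inj.mp hlA
    rw [← hgl]
    exact List.dropLast_append_getLast hPAne
  have hLdecomp : w.support = PA.dropLast ++ PB.reverse := by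
    rw [hsup, ← hPAy, hPBrev]
    simp
  have hchords : ∀ p ∈ w.support, ∀ q ∈ w.support, G.Adj p q → consecIn w.support p q := by
    intro p hp q hq hadj
    by_cases hcaseA : p ∈ PA ∧ q ∈ PA
    · rcases hipA.2.2 p hcaseA.1 q hcaseA.2 hadj with h | h
      · exact Or.inl (by rw [hsup]; exact infix_append_right h)
      · exact Or.inr (by rw [hsup]; exact infix_append_right h)
    · by_cases hcaseB : p ∈ PB ∧ q ∈ PB
      · rcases hipB.2.2 p hcaseB.1 q hcaseB.2 hadj with h | h
        · refine Or.inr ?_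
          rw [hLdecomp]
          refine infix_append_left ?_
          have := List.reverse_infix.mpr h
          simpa using this
        · refine Or.inl ?_
          rw [hLdecomp]
          refine infix_append_left ?_
          have := List.reverse_infix.mpr h
          simpa using this
      · exfalso
        have hmix : ∀ p' q', p' ∈ PA → q' ∈ PB → p' ∉ PB → q' ∉ PA →
            G.Adj p' q' → False := by
          intro p' q' h1 h2 h3 h4 hadj'
          have hp'A : p' ∈ A := by
            rcases hmA p' h1 with rfl | rfl | h
            · exact absurd (mem_of_head?_eq hhB) h3
            · exact absurd (mem_of_getLast?_eq hlB) h3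
            · exact h
          have hq'B : q' ∈ B := by
            rcases hmB q' h2 with rfl | rfl | h
            · exact absurd (mem_of_head?_eq hhA) h4
            · exact absurd (mem_of_getLast?_eq hlA) h4
            · exact h
          exact hABadj p' hp'A q' hq'B hadj'
        rcases hsupmem p hp with hpA | hpB <;> rcases hsupmem q hq with hqA | hqB
        · exact hcaseA ⟨hpA, hqA⟩
        · exact hmix p q hpA hqB (fun h => hcaseB ⟨h, hqB⟩) (fun h => hcaseA ⟨hpA, h⟩) hadj
        · exact hmix q p hqA hpB (fun h => hcaseB ⟨hpB, h⟩) (fun h => hcaseA ⟨h, hqA⟩)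
            hadj.symm
        · exact hcaseB ⟨hpB, hqB⟩
  have hne_nil : w ≠ Walk.nil := by
    intro h
    have h0 : w.length = 0 := by rw [h]; rfl
    omega
  have htrail : w.IsTrail := by
    constructor
    have hedges : w.edges = WA.edges ++ WB.reverse.edges := by
      rw [hwdef, Walk.edges_append]
    rw [hedges]
    apply List.Nodup.append
    · exact hWA.1.isTrail.edges_nodup
    · rw [Walk.edges_reverse]
      exact List.nodup_reverse.mpr hWB.1.isTrail.edges_nodup
    · intro e he1 he2
      rw [Walk.edges_reverse, List.mem_reverse] at he2
      induction e using Sym2.ind with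
      | _ p q =>
        have hpA := WA.fst_mem_support_of_mem_edges he1
        have hqA := WA.snd_mem_support_of_mem_edges he1
        have hpB := WB.fst_mem_support_of_mem_edges he2
        have hqB := WB.snd_mem_support_of_mem_edges he2
        rw [hWAs] at hpA hqA
        rw [hWBs] at hpB hqB
        have hadj : G.Adj p q := (G.mem_edgeSet).mp (WA.edges_subset_edgeSet he1)
        rcases hPAPB p hpA hpB with rfl | rfl <;> rcases hPAPB q hqA hqB with rfl | rfl
        · exact G.irrefl hadj
        · exact hnadj hadj
        · exact hnadj hadj.symm
        · exact G.irrefl hadj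
  have htail : w.support.tail.Nodup := by
    have hteq : w.support.tail = PA.tail ++ PB.reverse.tail := by
      rw [hsup]
      cases PA with
      | nil => exact absurd rfl hPAne
      | cons a t => rfl
    rw [hteq]
    apply List.Nodup.append
    · exact (List.tail_sublist _).nodup hipA.2.1
    · exact (List.tail_sublist _).nodup (List.nodup_reverse.mpr hipB.2.1)
    · intro z hz1 hz2
      have hzx : z ≠ x := by
        have hxt : x ∉ PA.tail := by
          have hnd := hipA.2.1
          rw [← List.cons_head?_tail (Option.mem_def.mpr hhA)] at hnd
          exact (List.nodup_cons.mp hnd).1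
        rintro rfl
        exact hxt hz1
      have hzy : z ≠ y := by
        have hyt : y ∉ PB.reverse.tail := by
          have hnd := List.nodup_reverse.mpr hipB.2.1
          rw [hPBrev] at hnd
          exact (List.nodup_cons.mp hnd).1
        rintro rfl
        exact hyt hz2
      have hzPA : z ∈ PA := (List.tail_sublist _).subset hz1
      have hzPB : z ∈ PB := List.mem_reverse.mp ((List.tail_sublist _).subset hz2)
      rcases hPAPB z hzPA hzPB with rfl | rfl
      · exact hzx rfl
      · exact hzy rfl
  have hcyc : w.IsCycle := ⟨⟨htrail, hne_nil⟩, htail⟩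
  exact hch ⟨x, w, ⟨hcyc, hchords⟩, by omega⟩

end Cyc

section Clique
variable {G : SimpleGraph V}

lemma sep_clique (hch : Chordal G) {S C : Set V} {a b : V} (hab : a ≠ b)
    (hnadj : ¬ G.Adj a b) (haS : a ∈ S) (hbS : b ∈ S) (hC : C ⊆ S \ {a, b})
    (hsep : SepIn G S C a b) (hmin : ∀ c ∈ C, ¬ SepIn G S (C \ {c}) a b) :
    ∀ x ∈ C, ∀ y ∈ C, x ≠ y → G.Adj x y := by
  intro x hx y hy hxy
  by_contra hnxy
  have haC : a ∉ C := fun h => (hC h).2 (by simp)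
  have hbC : b ∉ C := fun h => (hC h).2 (by simp)
  set A := {z | SReach G (S \ C) a z} with hA
  set B := {z | SReach G (S \ C) b z} with hB
  have hABdisj : ∀ z, z ∈ A → z ∈ B → False := fun z h1 h2 =>
    hsep (SReach.trans h1 (SReach.symm h2))
  have hABadj : ∀ p ∈ A, ∀ q ∈ B, ¬ G.Adj p q := by
    intro p hp q hq hadj
    exact hABdisj q (comp_step hp hadj (SReach.mem_right hq)) hq
  have hxSC : x ∉ (S \ C : Set V) := fun h => h.2 hx
  have hySC : y ∉ (S \ C : Set V) := fun h => h.2 hy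
  have hxA : x ∉ A := fun h => hxSC (SReach.mem_right h)
  have hyA : y ∉ A := fun h => hySC (SReach.mem_right h)
  have hxB : x ∉ B := fun h => hxSC (SReach.mem_right h)
  have hyB : y ∉ B := fun h => hySC (SReach.mem_right h)
  obtain ⟨px, hpx, hpxadj⟩ := sep_nbr hsep haC hx (hmin x hx)
  obtain ⟨py, hpy, hpyadj⟩ := sep_nbr hsep haC hy (hmin y hy)
  obtain ⟨qx, hqx, hqxadj⟩ := sep_nbr hsep.symm hbC hx (fun h => hmin x hx h.symm)
  obtain ⟨qy, hqy, hqyadj⟩ := sep_nbr hsep.symm hbC hy (fun h => hmin y hy h.symm)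
  have hbuild : ∀ (c0 : V) (D : Set V), D = {z | SReach G (S \ C) c0 z} →
      ∀ p1 p2, SReach G (S \ C) c0 p1 → SReach G (S \ C) c0 p2 →
      G.Adj p1 x → G.Adj p2 y →
      ∃ P, IPl G P ∧ P.head? = some x ∧ P.getLast? = some y ∧
        ∀ z ∈ P, z = x ∨ z = y ∨ z ∈ D := by
    intro c0 D hD p1 p2 h1 h2 hadj1 hadj2
    obtain ⟨l, hlc, hlh, hll, hlm⟩ := (SReach.symm h1).trans h2
    have hlmD : ∀ m ∈ l, m ∈ D := by
      intro m hm
      rw [hD]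
      exact SReach.trans h1 (GChain.mem_reach ⟨hlc, hlh, hll, hlm⟩ m hm)
    have hlne : l ≠ [] := by rintro rfl; simp at hlh
    have hGC : GChain G (insert x (insert y D)) x y (x :: (l ++ [y])) := by
      refine ⟨?_, rfl, ?_, ?_⟩
      · refine List.isChain_cons.mpr ⟨?_, ?_⟩
        · intro z hz
          rw [List.head?_append_of_ne_nil _ hlne, hlh] at hz
          rw [Option.mem_def, Option.some_inj] at hz
          rw [← hz]
          exact hadj1.symm
        · refine List.isChain_append.mpr ⟨hlc, List.isChain_singleton _, ?_⟩
          intro z1 hz1 z2 hz2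
          rw [hll] at hz1
          simp only [Option.mem_def, Option.some_inj, List.head?_cons] at hz1 hz2
          rw [← hz1, ← hz2]
          exact hadj2
      · rw [show x :: (l ++ [y]) = (x :: l) ++ [y] from rfl, List.getLast?_concat]
      · intro z hz
        rcases List.mem_cons.mp hz with rfl | hz'
        · exact Set.mem_insert _ _
        · rcases List.mem_append.mp hz' with h | h
          · exact Set.mem_insert_of_mem _ (Set.mem_insert_of_mem _ (hlmD z h))
          · simp only [List.mem_singleton] at h
            exact h ▸ Set.mem_insert_of_mem _ (Set.mem_insert _ _)
    obtain ⟨P, hipP, hPc, hPh, hPl, hPm⟩ := SReach.exists_IPl ⟨_, hGC⟩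
    refine ⟨P, hipP, hPh, hPl, ?_⟩
    intro z hz
    rcases hPm z hz with h | h
    · exact Or.inl h
    · rcases h with h | h
      · exact Or.inr (Or.inl h)
      · exact Or.inr (Or.inr h)
  obtain ⟨PA, hipPA, hhPA, hlPA, hmPA⟩ :=
    hbuild a A hA px py hpx hpy hpxadj hpyadj
  obtain ⟨PB, hipPB, hhPB, hlPB, hmPB⟩ :=
    hbuild b B hB qx qy hqx hqy hqxadj hqyadj
  exact no_two_disjoint_induced_paths hch hipPA hipPB hhPA hlPA hhPB hlPB hmPA hmPB
    hxy hnxy hxA hyA hxB hyB hABdisj hABadj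

end Clique

section Dirac
variable {G : SimpleGraph V}

lemma dirac_aux [Fintype V] (hch : Chordal G) :
    ∀ (n : ℕ) (S : Set V), S.ncard = n →
      (∀ x ∈ S, ∀ y ∈ S, x ≠ y → G.Adj x y) ∨
      ∃ s t, s ∈ S ∧ t ∈ S ∧ s ≠ t ∧ ¬ G.Adj s t ∧ Simp G S s ∧ Simp G S t := by
  intro n
  induction n using Nat.strong_induction_on with
  | _ n ih =>
    intro S hn
    by_cases hcl : ∀ x ∈ S, ∀ y ∈ S, x ≠ y → G.Adj x y
    · exact Or.inl hcl
    right
    push_neg at hcl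
    obtain ⟨a, haS, b, hbS, hab, hnadj⟩ := hcl
    obtain ⟨C, hC, hsep, hmin⟩ := exists_min_sep hab hnadj haS hbS
    have hclique := sep_clique hch hab hnadj haS hbS hC hsep hmin
    have haC : a ∉ C := fun h => (hC h).2 (by simp)
    have hbC : b ∉ C := fun h => (hC h).2 (by simp)
    have hside : ∀ (c0 : V) (D : Set V), c0 ∈ S → c0 ∉ C →
        D = {z | SReach G (S \ C) c0 z} → (S \ (D ∪ C)).Nonempty →
        ∃ s ∈ D, Simp G S s := by
      intro c0 D hc0S hc0C hD hne
      have hDsub : D ⊆ S \ C := by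
        rw [hD]; exact fun z hz => SReach.mem_right hz
      have hclosed : ∀ z ∈ D, ∀ p ∈ S, G.Adj z p → p ∈ D ∪ C := by
        intro z hz p hp hadj
        by_cases hpC : p ∈ C
        · exact Or.inr hpC
        · left
          rw [hD]
          have hz' : SReach G (S \ C) c0 z := by rw [hD] at hz; exact hz
          exact comp_step hz' hadj ⟨hp, hpC⟩
      have hc0D : c0 ∈ D := by
        rw [hD]; exact SReach.refl ⟨hc0S, hc0C⟩
      have hDCS : D ∪ C ⊆ S :=
        Set.union_subset (hDsub.trans Set.diff_subset) (hC.trans Set.diff_subset)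
      have hlt : (D ∪ C).ncard < n := by
        rw [← hn]
        refine Set.ncard_lt_ncard ?_ (Set.toFinite S)
        obtain ⟨m, hmS, hmD⟩ := hne
        exact ⟨hDCS, fun hsub => hmD (hsub hmS)⟩
      rcases ih _ hlt (D ∪ C) rfl with hcl2 | ⟨s, t, hsD, htD, hst, hstn, hsimp_s, hsimp_t⟩
      · refine ⟨c0, hc0D, hc0S, ?_⟩
        intro p hp q hq h1 h2 hpq
        exact hcl2 p (hclosed c0 hc0D p hp h1) q (hclosed c0 hc0D q hq h2) hpq
      · have hkey : ∀ u, u ∈ D ∪ C → Simp G (D ∪ C) u → u ∈ D → Simp G S u := by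
          intro u huDC hsimp huD
          refine ⟨hDCS huDC, ?_⟩
          intro p hp q hq h1 h2 hpq
          exact hsimp.2 p (hclosed u huD p hp h1) q (hclosed u huD q hq h2) h1 h2 hpq
        rcases em (s ∈ D) with hsD' | hsD'
        · exact ⟨s, hsD', hkey s hsD hsimp_s hsD'⟩
        · have hsC : s ∈ C := hsD.resolve_left hsD'
          have htD' : t ∈ D := by
            rcases htD with h | h
            · exact h
            · exact absurd (hclique s hsC t h hst) hstn
          exact ⟨t, htD', hkey t htD hsimp_t htD'⟩
    have hbA : ¬ SReach G (S \ C) a b := hsep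
    obtain ⟨sA, hsA, hsimpA⟩ := hside a _ haS haC rfl
      ⟨b, hbS, by
        rintro (h | h)
        · exact hbA h
        · exact hbC h⟩
    obtain ⟨sB, hsB, hsimpB⟩ := hside b _ hbS hbC rfl
      ⟨a, haS, by
        rintro (h | h)
        · exact hbA (SReach.symm h)
        · exact haC h⟩
    have hsAr : SReach G (S \ C) a sA := hsA
    have hsBr : SReach G (S \ C) b sB := hsB
    refine ⟨sA, sB, hsimpA.1, hsimpB.1, ?_, ?_, hsimpA, hsimpB⟩
    · rintro rfl
      exact hsep (hsAr.trans hsBr.symm)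
    · intro hadj
      exact hsep ((comp_step hsAr hadj hsBr.mem_right).trans hsBr.symm)

lemma dirac [Fintype V] (hch : Chordal G) (S : Set V) :
    (∀ x ∈ S, ∀ y ∈ S, x ≠ y → G.Adj x y) ∨
      ∃ s t, s ∈ S ∧ t ∈ S ∧ s ≠ t ∧ ¬ G.Adj s t ∧ Simp G S s ∧ Simp G S t :=
  dirac_aux hch _ S rfl

end Dirac

section PathLemma
variable {G : SimpleGraph V}

lemma side_simp [Fintype V] (hch : Chordal G) {S C D : Set V} {c0 : V}
    (hCS : C ⊆ S) (hclique : ∀ x ∈ C, ∀ y ∈ C, x ≠ y → G.Adj x y)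
    (hDsub : D ⊆ S \ C)
    (hclosed : ∀ z ∈ D, ∀ p ∈ S, G.Adj z p → p ∈ D ∪ C)
    (hc0D : c0 ∈ D) : ∃ s ∈ D, Simp G S s := by
  have hDCS : D ∪ C ⊆ S := Set.union_subset (hDsub.trans Set.diff_subset) hCS
  rcases dirac hch (D ∪ C) with hcl2 | ⟨s, t, hsD, htD, hst, hstn, hsimp_s, hsimp_t⟩
  · refine ⟨c0, hc0D, hDCS (Or.inl hc0D), ?_⟩
    intro p hp q hq h1 h2 hpq
    exact hcl2 p (hclosed c0 hc0D p hp h1) q (hclosed c0 hc0D q hq h2) hpq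
  · have hkey : ∀ u, u ∈ D ∪ C → Simp G (D ∪ C) u → u ∈ D → Simp G S u := by
      intro u huDC hsimp huD
      refine ⟨hDCS huDC, ?_⟩
      intro p hp q hq h1 h2 hpq
      exact hsimp.2 p (hclosed u huD p hp h1) q (hclosed u huD q hq h2) h1 h2 hpq
    rcases em (s ∈ D) with hsD' | hsD'
    · exact ⟨s, hsD', hkey s hsD hsimp_s hsD'⟩
    · have hsC : s ∈ C := hsD.resolve_left hsD'
      have htD' : t ∈ D := by
        rcases htD with h | h
        · exact h
        · exact absurd (hclique s hsC t h hst) hstn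
      exact ⟨t, htD', hkey t htD hsimp_t htD'⟩

lemma getLast?_cons_ne {a : V} {l : List V} (h : l ≠ []) :
    (a :: l).getLast? = l.getLast? := by
  cases l with
  | nil => exact absurd rfl h
  | cons b t => exact List.getLast?_cons_cons

lemma glue_paths {v sA sB : V} {PA PB : List V} {A B : Set V}
    (hipA : IPl G PA) (hipB : IPl G PB)
    (hhA : PA.head? = some v) (hlA : PA.getLast? = some sA)
    (hhB : PB.head? = some v) (hlB : PB.getLast? = some sB)
    (hmA : ∀ z ∈ PA, z = v ∨ z ∈ A) (hmB : ∀ z ∈ PB, z = v ∨ z ∈ B)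
    (hvA : v ∉ A) (hvB : v ∉ B)
    (hABdisj : ∀ z, z ∈ A → z ∈ B → False)
    (hABadj : ∀ p ∈ A, ∀ q ∈ B, ¬ G.Adj p q)
    (hsA : sA ∈ A) (hsB : sB ∈ B) :
    ∃ L, IPl G L ∧ L.head? = some sA ∧ L.getLast? = some sB ∧ v ∈ L ∧
      ∀ z ∈ L, z ∈ PA ∨ z ∈ PB := by
  have hPBcons : v :: PB.tail = PB := List.cons_head?_tail (Option.mem_def.mpr hhB)
  have hvPA : v ∈ PA := mem_of_head?_eq hhA
  have hvPB : v ∈ PB := mem_of_head?_eq hhB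
  have hvPBt : v ∉ PB.tail := by
    have hnd := hipB.2.1
    rw [← hPBcons] at hnd
    exact (List.nodup_cons.mp hnd).1
  have hrevne : PA.reverse ≠ [] := by
    intro h
    rw [List.reverse_eq_nil_iff] at h
    rw [h] at hhA
    simp at hhA
  have hrevlast : PA.reverse.getLast? = some v := by
    rw [List.getLast?_reverse]; exact hhA
  have hL2 : PA.reverse ++ PB.tail = PA.reverse.dropLast ++ PB := by
    conv_lhs => rw [← List.dropLast_append_getLast hrevne]
    rw [List.append_assoc]
    congr 1
    have : PA.reverse.getLast hrevne = v := by
      rw [List.getLast?_eq_getLast hrevne] at hrevlast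
      exact Option.some_inj.mp hrevlast
    rw [this]
    exact hPBcons
  have hmemL : ∀ z ∈ PA.reverse ++ PB.tail, z ∈ PA ∨ z ∈ PB := by
    intro z hz
    rcases List.mem_append.mp hz with h | h
    · exact Or.inl (List.mem_reverse.mp h)
    · exact Or.inr ((List.tail_sublist _).subset h)
  have honlyv : ∀ z, z ∈ PA → z ∈ PB → z = v := by
    intro z h1 h2
    rcases hmA z h1 with rfl | h1'
    · rfl
    · rcases hmB z h2 with rfl | h2'
      · rfl
      · exact (hABdisj z h1' h2').elim
  refine ⟨PA.reverse ++ PB.tail, ⟨?_, ?_, ?_⟩, ?_, ?_, ?_, hmemL⟩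
  · -- chain'
    refine List.isChain_append.mpr ⟨?_, List.IsChain.tail hipB.1, ?_⟩
    · exact (List.isChain_reverse).mpr (List.IsChain.imp (fun a b hab => hab.symm) hipA.1)
    · intro z1 hz1 z2 hz2
      rw [hrevlast] at hz1
      rw [Option.mem_def, Option.some_inj] at hz1
      subst hz1
      have := List.isChain_cons.mp (hPBcons ▸ hipB.1)
      exact this.1 z2 hz2
  · -- nodup
    apply List.Nodup.append
    · exact List.nodup_reverse.mpr hipA.2.1
    · exact (List.tail_sublist _).nodup hipB.2.1
    · intro z hz1 hz2
      have hzPA : z ∈ PA := List.mem_reverse.mp hz1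
      have hzPB : z ∈ PB := (List.tail_sublist _).subset hz2
      have := honlyv z hzPA hzPB
      subst this
      exact hvPBt hz2
  · -- chords
    intro p hp q hq hadj
    by_cases hcaseA : p ∈ PA ∧ q ∈ PA
    · rcases hipA.2.2 p hcaseA.1 q hcaseA.2 hadj with h | h
      · refine Or.inr (infix_append_right ?_)
        have := List.reverse_infix.mpr h
        simpa using this
      · refine Or.inl (infix_append_right ?_)
        have := List.reverse_infix.mpr h
        simpa using this
    · by_cases hcaseB : p ∈ PB ∧ q ∈ PB
      · rcases hipB.2.2 p hcaseB.1 q hcaseB.2 hadj with h | h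
        · exact Or.inl (by rw [hL2]; exact infix_append_left h)
        · exact Or.inr (by rw [hL2]; exact infix_append_left h)
      · exfalso
        have hmix : ∀ p' q', p' ∈ PA → q' ∈ PB → p' ∉ PB → q' ∉ PA →
            G.Adj p' q' → False := by
          intro p' q' h1 h2 h3 h4 hadj'
          have hp'A : p' ∈ A := by
            rcases hmA p' h1 with rfl | h
            · exact absurd hvPB h3
            · exact h
          have hq'B : q' ∈ B := by
            rcases hmB q' h2 with rfl | h
            · exact absurd hvPA h4
            · exact h
          exact hABadj p' hp'A q' hq'B hadj'
        rcases hmemL p hp with hpA | hpB <;> rcases hmemL q hq with hqA | hqB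
        · exact hcaseA ⟨hpA, hqA⟩
        · exact hmix p q hpA hqB (fun h => hcaseB ⟨h, hqB⟩) (fun h => hcaseA ⟨hpA, h⟩) hadj
        · exact hmix q p hqA hpB (fun h => hcaseB ⟨hpB, h⟩) (fun h => hcaseA ⟨h, hqA⟩)
            hadj.symm
        · exact hcaseB ⟨hpB, hqB⟩
  · rw [List.head?_append_of_ne_nil _ hrevne, List.head?_reverse]
    exact hlA
  · rw [hL2]
    rw [List.getLast?_append_of_ne_nil _ (by rintro rfl; simp at hhB)]
    exact hlB
  · exact List.mem_append.mpr (Or.inl (List.mem_reverse.mpr hvPA))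

end PathLemma

section C3
variable {G : SimpleGraph V}

lemma path_lemma [Fintype V] (hch : Chordal G) {S : Set V} {v : V} (hv : v ∈ S) :
    Simp G S v ∨ ∃ L sA sB, IPl G L ∧ L.head? = some sA ∧ L.getLast? = some sB ∧
      (∀ z ∈ L, z ∈ S) ∧ v ∈ L ∧ Simp G S sA ∧ Simp G S sB := by
  by_cases hsimp : Simp G S v
  · exact Or.inl hsimp
  right
  have hex : ∃ a b, a ∈ S ∧ b ∈ S ∧ G.Adj v a ∧ G.Adj v b ∧ a ≠ b ∧ ¬ G.Adj a b := by
    by_contra hcon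
    push_neg at hcon
    exact hsimp ⟨hv, fun p hp q hq h1 h2 hpq => hcon p q hp hq h1 h2 hpq⟩
  obtain ⟨a, b, haS, hbS, hva, hvb, hab, hnadjab⟩ := hex
  obtain ⟨C, hC, hsep, hmin⟩ := exists_min_sep hab hnadjab haS hbS
  have hclique := sep_clique hch hab hnadjab haS hbS hC hsep hmin
  have haC : a ∉ C := fun h => (hC h).2 (by simp)
  have hbC : b ∉ C := fun h => (hC h).2 (by simp)
  set A := {z | SReach G (S \ C) a z} with hA
  set B := {z | SReach G (S \ C) b z} with hB
  have haA : a ∈ A := SReach.refl ⟨haS, haC⟩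
  have hbB : b ∈ B := SReach.refl ⟨hbS, hbC⟩
  have hvC : v ∈ C := by
    by_contra hvC
    have hvSC : v ∈ S \ C := ⟨hv, hvC⟩
    have h1 : SReach G (S \ C) a v := comp_step (SReach.refl ⟨haS, haC⟩) hva.symm hvSC
    have h2 : SReach G (S \ C) b v := comp_step (SReach.refl ⟨hbS, hbC⟩) hvb.symm hvSC
    exact hsep (h1.trans h2.symm)
  have hvA : v ∉ A := fun h => (SReach.mem_right h).2 hvC
  have hvB : v ∉ B := fun h => (SReach.mem_right h).2 hvC
  have hAsub : A ⊆ S \ C := fun z hz => SReach.mem_right hz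
  have hBsub : B ⊆ S \ C := fun z hz => SReach.mem_right hz
  have hclosedA : ∀ z ∈ A, ∀ p ∈ S, G.Adj z p → p ∈ A ∪ C := by
    intro z hz p hp hadj
    by_cases hpC : p ∈ C
    · exact Or.inr hpC
    · exact Or.inl (comp_step hz hadj ⟨hp, hpC⟩)
  have hclosedB : ∀ z ∈ B, ∀ p ∈ S, G.Adj z p → p ∈ B ∪ C := by
    intro z hz p hp hadj
    by_cases hpC : p ∈ C
    · exact Or.inr hpC
    · exact Or.inl (comp_step hz hadj ⟨hp, hpC⟩)
  have hABdisj : ∀ z, z ∈ A → z ∈ B → False := fun z h1 h2 =>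
    hsep (SReach.trans h1 (SReach.symm h2))
  have hABadj : ∀ p ∈ A, ∀ q ∈ B, ¬ G.Adj p q := by
    intro p hp q hq hadj
    exact hABdisj q (comp_step hp hadj (SReach.mem_right hq)) hq
  obtain ⟨sA, hsAA, hsimpA⟩ :=
    side_simp hch (hC.trans Set.diff_subset) hclique hAsub hclosedA haA
  obtain ⟨sB, hsBB, hsimpB⟩ :=
    side_simp hch (hC.trans Set.diff_subset) hclique hBsub hclosedB hbB
  have hbuild : ∀ (c0 s0 : V) (D : Set V), D = {z | SReach G (S \ C) c0 z} →
      G.Adj v c0 → c0 ∈ D → s0 ∈ D →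
      ∃ P, IPl G P ∧ P.head? = some v ∧ P.getLast? = some s0 ∧
        ∀ z ∈ P, z = v ∨ z ∈ D := by
    intro c0 s0 D hD hadj hc0D hs0D
    have hreach : SReach G (S \ C) c0 s0 := by rw [hD] at hs0D; exact hs0D
    obtain ⟨l, hlc, hlh, hll, hlm⟩ := hreach
    have hlmD : ∀ m ∈ l, m ∈ D := by
      intro m hm
      rw [hD]
      exact GChain.mem_reach ⟨hlc, hlh, hll, hlm⟩ m hm
    have hlne : l ≠ [] := by rintro rfl; simp at hlh
    have hGC : GChain G (insert v D) v s0 (v :: l) := by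
      refine ⟨?_, rfl, ?_, ?_⟩
      · refine List.isChain_cons.mpr ⟨?_, hlc⟩
        intro z hz
        rw [hlh, Option.mem_def, Option.some_inj] at hz
        rw [← hz]
        exact hadj
      · rw [getLast?_cons_ne hlne]; exact hll
      · intro z hz
        rcases List.mem_cons.mp hz with rfl | hz'
        · exact Set.mem_insert _ _
        · exact Set.mem_insert_of_mem _ (hlmD z hz')
    obtain ⟨P, hipP, hPchain, hPh, hPl, hPm⟩ := SReach.exists_IPl ⟨_, hGC⟩
    exact ⟨P, hipP, hPh, hPl, fun z hz => Set.mem_insert_iff.mp (hPm z hz)⟩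
  obtain ⟨PA, hipPA, hhPA, hlPA, hmPA⟩ := hbuild a sA A hA hva haA hsAA
  obtain ⟨PB, hipPB, hhPB, hlPB, hmPB⟩ := hbuild b sB B hB hvb hbB hsBB
  obtain ⟨L, hipL, hhL, hlL, hvL, hmL⟩ :=
    glue_paths hipPA hipPB hhPA hlPA hhPB hlPB hmPA hmPB hvA hvB hABdisj hABadj
      hsAA hsBB
  refine ⟨L, sA, sB, hipL, hhL, hlL, ?_, hvL, hsimpA, hsimpB⟩
  intro z hz
  rcases hmL z hz with h | h
  · rcases hmPA z h with rfl | h'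
    · exact hv
    · exact (hAsub h').1
  · rcases hmPB z h with rfl | h'
    · exact hv
    · exact (hBsub h').1

end C3

/-- A finite connected simple graph `G` is a convex geometry with respect to
the monophonic convexity if and only if `G` is chordal. -/
theorem monophonic_convex_geometry_iff_chordal
    {V : Type*} [Fintype V] (G : SimpleGraph V) (hconn : G.Connected) :
    IsConvexGeometry (PConvex G (fun _ _ w => IsInducedPathW G w)) ↔ Chordal G := by
  constructor
  · exact convexGeometry_chordal
  · intro hch S hS
    apply Set.Subset.antisymm
    · intro v hv
      rcases path_lemma hch hv with hsimp | ⟨L, sA, sB, hipL, hhL, hlL, hLS, hvL, hsA, hsB⟩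
      · exact subset_chull _ _ (simp_mem_extreme hS hsimp)
      · obtain ⟨w, hwsup, hw⟩ := walk_of_IPl (u := sA) (z := sB) hipL hhL hlL
        exact chull_convex (subset_chull _ _ (simp_mem_extreme hS hsA))
          (subset_chull _ _ (simp_mem_extreme hS hsB)) w hw v (by rw [hwsup]; exact hvL)
    · exact chull_min (fun x hx => hx.1) hS
end

section
/- Let G be a finite connected chordal graph and let S be a convex set of G with respect to the strong convexity. Then a vertex v ∈ S is an extreme vertex of S if and only if v is a simple vertex of the induced subgraph G[S]. -/
open SimpleGraph

variable {V : Type*} {W : Type*}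

section Helpers
variable {G : SimpleGraph V}

lemma support_get_eq_getVert {u v : V} (w : G.Walk u v) (i : ℕ) (hi : i < w.support.length) :
    w.support.get ⟨i, hi⟩ = w.getVert i := by
  induction w generalizing i with
  | nil =>
    simp [SimpleGraph.Walk.support] at hi
    subst hi
    simp [SimpleGraph.Walk.support]
  | cons h p ih =>
    cases i with
    | zero => simp [SimpleGraph.Walk.support]
    | succ n =>
      simpa [SimpleGraph.Walk.support] using ih n (by simpa [SimpleGraph.Walk.support] using hi)

lemma getVert_ne_of_isPath {u v : V} {w : G.Walk u v} (hw : w.IsPath) {i j : ℕ}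
    (hi : i ≤ w.length) (hj : j ≤ w.length) (hij : i ≠ j) : w.getVert i ≠ w.getVert j := by
  have hi' : i < w.support.length := by rw [SimpleGraph.Walk.length_support]; omega
  have hj' : j < w.support.length := by rw [SimpleGraph.Walk.length_support]; omega
  rw [← support_get_eq_getVert w i hi', ← support_get_eq_getVert w j hj']
  intro h
  have := (List.Nodup.get_inj_iff hw.support_nodup).mp h
  simp at this
  exact hij this

lemma getVert_mem_support' {u v : V} (w : G.Walk u v) {i : ℕ} (hi : i ≤ w.length) :
    w.getVert i ∈ w.support :=
  SimpleGraph.Walk.mem_support_iff_exists_getVert.mpr ⟨i, rfl, hi⟩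

lemma mem_cN {S : Set V} {p q : V} (hp : p ∈ S) (hq : q ∈ S) :
    (⟨p, hp⟩ : S) ∈ closedNbhd (G.induce S) ⟨q, hq⟩ ↔ p = q ∨ G.Adj q p := by
  simp [closedNbhd, Subtype.ext_iff]

lemma no_c4 (hch : Chordal G) {p q r s : V}
    (hpq : G.Adj p q) (hqr : G.Adj q r) (hrs : G.Adj r s) (hsp : G.Adj s p)
    (hpr : ¬ G.Adj p r) (hqs : ¬ G.Adj q s) (hpr' : p ≠ r) (hqs' : q ≠ s) : False := by
  apply hch
  refine ⟨p, .cons hpq (.cons hqr (.cons hrs (.cons hsp .nil))), ⟨?_, ?_⟩, by simp⟩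
  · constructor
    · constructor
      · simp [SimpleGraph.Walk.isTrail_def, Sym2.eq_iff, hpq.ne, hqr.ne, hrs.ne, hsp.ne,
          hpq.ne', hqr.ne', hrs.ne', hsp.ne', hpr', hqs', Ne.symm hpr', Ne.symm hqs']
      · simp
    · simp [SimpleGraph.Walk.support, hpq.ne, hqr.ne, hrs.ne, hsp.ne, hpq.ne', hqr.ne',
        hrs.ne', hsp.ne', hpr', hqs', Ne.symm hpr', Ne.symm hqs']
  · intro x hx y hy hxy
    simp [SimpleGraph.Walk.support] at hx hy
    rcases hx with rfl | rfl | rfl | rfl | rfl <;> rcases hy with rfl | rfl | rfl | rfl | rfl <;>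
      first
      | exact absurd hxy G.irrefl
      | exact absurd hxy hpr
      | exact absurd hxy hqs
      | exact absurd hxy (fun h => hpr h.symm)
      | exact absurd hxy (fun h => hqs h.symm)
      | exact Or.inl ⟨[], [_,_,_], rfl⟩
      | exact Or.inr ⟨[], [_,_,_], rfl⟩
      | exact Or.inl ⟨[_], [_,_], rfl⟩
      | exact Or.inr ⟨[_], [_,_], rfl⟩
      | exact Or.inl ⟨[_,_], [_], rfl⟩
      | exact Or.inr ⟨[_,_], [_], rfl⟩
      | exact Or.inl ⟨[_,_,_], [], rfl⟩
      | exact Or.inr ⟨[_,_,_], [], rfl⟩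

lemma ec_len2 {a v b : V} (h1 : G.Adj a v) (h2 : G.Adj v b)
    (hab : ¬ G.Adj a b) (hne : a ≠ b) :
    IsEvenChorded G (SimpleGraph.Walk.cons h1 (.cons h2 .nil)) := by
  constructor
  · simp [SimpleGraph.Walk.isPath_def, h1.ne, h2.ne, hne]
  · intro i j hi hj hij hadj
    simp [SimpleGraph.Walk.support] at hi hj
    interval_cases j <;> interval_cases i <;> simp_all [List.get]

lemma ec_len3 {a b c d : V} (h1 : G.Adj a b) (h2 : G.Adj b c) (h3 : G.Adj c d)
    (hac : ¬ G.Adj a c) (had : ¬ G.Adj a d) (hbd : ¬ G.Adj b d)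
    (hac' : a ≠ c) (had' : a ≠ d) (hbd' : b ≠ d) :
    IsEvenChorded G (SimpleGraph.Walk.cons h1 (.cons h2 (.cons h3 .nil))) := by
  constructor
  · simp [SimpleGraph.Walk.isPath_def, h1.ne, h2.ne, h3.ne, hac', had', hbd']
  · intro i j hi hj hij hadj
    simp [SimpleGraph.Walk.support] at hi hj
    interval_cases j <;> interval_cases i <;> simp_all [List.get]

lemma ec_len4 {a b c d e : V} (h1 : G.Adj a b) (h2 : G.Adj b c) (h3 : G.Adj c d) (h4 : G.Adj d e)
    (hac : ¬ G.Adj a c) (had : ¬ G.Adj a d) (hae : ¬ G.Adj a e)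
    (hbe : ¬ G.Adj b e) (hce : ¬ G.Adj c e)
    (hac' : a ≠ c) (had' : a ≠ d) (hae' : a ≠ e) (hbd' : b ≠ d) (hbe' : b ≠ e) (hce' : c ≠ e) :
    IsEvenChorded G (SimpleGraph.Walk.cons h1 (.cons h2 (.cons h3 (.cons h4 .nil)))) := by
  constructor
  · simp [SimpleGraph.Walk.isPath_def, h1.ne, h2.ne, h3.ne, h4.ne,
      hac', had', hae', hbd', hbe', hce']
  · intro i j hi hj hij hadj
    simp [SimpleGraph.Walk.support] at hi hj
    interval_cases j <;> interval_cases i <;> simp_all [List.get]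

lemma chord_fact {u v : V} {w : G.Walk u v} (hw : IsEvenChorded G w) {i j : ℕ}
    (hj : j ≤ w.length) (hij : i + 1 < j) (hadj : G.Adj (w.getVert i) (w.getVert j)) :
    Even (j - i) ∧ 0 < i ∧ j < w.length := by
  have hi' : i < w.support.length := by rw [SimpleGraph.Walk.length_support]; omega
  have hj' : j < w.support.length := by rw [SimpleGraph.Walk.length_support]; omega
  have := hw.2 i j hi' hj' hij
    (by rw [support_get_eq_getVert, support_get_eq_getVert]; exact hadj)
  rwa [SimpleGraph.Walk.length_support, Nat.add_sub_cancel] at this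

end Helpers

/-- In a finite connected chordal graph, a vertex `v` of a strong convex set
`S` is an extreme vertex of `S` iff `v` is a simple vertex of `G[S]`. -/
theorem strong_convexity_extreme_iff_simple
    {V : Type*} [Fintype V] (G : SimpleGraph V) (hconn : G.Connected) (hch : Chordal G)
    (S : Set V) (hS : PConvex G (fun _ _ w => IsEvenChorded G w) S) (v : V) (hv : v ∈ S) :
    PConvex G (fun _ _ w => IsEvenChorded G w) (S \ {v}) ↔
      SimpleVtx (G.induce S) ⟨v, hv⟩ := by
  constructor
  · -- extreme → simple
    intro hconv
    by_contra hns
    have key : ∀ {e₁ e₂ : V} (he₁ : e₁ ∈ S) (he₂ : e₂ ∈ S), e₁ ≠ v → e₂ ≠ v →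
        ∀ w : G.Walk e₁ e₂, IsEvenChorded G w → v ∈ w.support → False := by
      intro e₁ e₂ he₁ he₂ h1 h2 w hw hvs
      exact (hconv ⟨he₁, by simpa using h1⟩ ⟨he₂, by simpa using h2⟩ w hw v hvs).2 rfl
    rw [SimpleVtx] at hns
    push_neg at hns
    obtain ⟨U, hU, W, hW, hn1, hn2⟩ := hns
    obtain ⟨p, hpS⟩ := U
    obtain ⟨q, hqS⟩ := W
    rw [mem_cN hpS hv] at hU
    rw [mem_cN hqS hv] at hW
    obtain ⟨⟨x, hxS⟩, hx1, hx2⟩ := Set.not_subset.mp hn1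
    obtain ⟨⟨y, hyS⟩, hy1, hy2⟩ := Set.not_subset.mp hn2
    rw [mem_cN hxS hpS] at hx1
    rw [mem_cN hxS hqS] at hx2
    rw [mem_cN hyS hqS] at hy1
    rw [mem_cN hyS hpS] at hy2
    push_neg at hx2 hy2
    obtain ⟨hxq_ne, hxq_na⟩ := hx2
    obtain ⟨hyp_ne, hyp_na⟩ := hy2
    have hpq : p ≠ q := by
      rintro rfl
      exact hn1 (by rw [show (⟨p, hpS⟩ : S) = ⟨p, hqS⟩ from rfl])
    have hxv : x ≠ v := by
      rintro rfl
      rcases hW with h | h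
      · exact hxq_ne h.symm
      · exact hxq_na h.symm
    have hyv : y ≠ v := by
      rintro rfl
      rcases hU with h | h
      · exact hyp_ne h.symm
      · exact hyp_na h.symm
    have hxy : x ≠ y := by
      rintro rfl
      rcases hx1 with h | h
      · exact hyp_ne h
      · exact hyp_na h
    rcases hU with heq | hpv
    · -- p = v
      rw [heq] at hx1 hyp_ne hyp_na hpq
      have hqv : G.Adj v q := hW.resolve_left (fun h => hpq h.symm)
      have hxvadj : G.Adj v x := hx1.resolve_left hxv
      have hyq_ne : y ≠ q := fun h => hyp_na (by rw [h]; exact hqv)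
      have hyq : G.Adj q y := hy1.resolve_left hyq_ne
      by_cases hxyadj : G.Adj x y
      · exact no_c4 hch hxvadj.symm hqv hyq hxyadj.symm
          (fun h => hxq_na h.symm) hyp_na hxq_ne (Ne.symm hyv)
      · exact key hxS hyS hxv hyv
          (.cons hxvadj.symm (.cons hqv (.cons hyq .nil)))
          (ec_len3 _ _ _ (fun h => hxq_na h.symm) hxyadj hyp_na hxq_ne hxy (Ne.symm hyv))
          (by simp [SimpleGraph.Walk.support])
    · rcases hW with heq | hqv
      · -- q = v
        rw [heq] at hy1 hxq_ne hxq_na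
        have hyvadj : G.Adj v y := hy1.resolve_left hyv
        have hxp_ne : x ≠ p := fun h => hxq_na (by rw [h]; exact hpv)
        have hxp : G.Adj p x := hx1.resolve_left hxp_ne
        by_cases hxyadj : G.Adj x y
        · exact no_c4 hch hxp.symm hpv.symm hyvadj hxyadj.symm
            (fun h => hxq_na h.symm) hyp_na hxq_ne (Ne.symm hyp_ne)
        · exact key hxS hyS hxv hyv
            (.cons hxp.symm (.cons hpv.symm (.cons hyvadj .nil)))
            (ec_len3 _ _ _ (fun h => hxq_na h.symm) hxyadj hyp_na hxq_ne hxy (Ne.symm hyp_ne))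
            (by simp [SimpleGraph.Walk.support])
      · -- p ≠ v, q ≠ v
        by_cases hpqadj : G.Adj p q
        · have hxp_ne : x ≠ p := fun h => hxq_na (by rw [h]; exact hpqadj.symm)
          have hxp : G.Adj p x := hx1.resolve_left hxp_ne
          have hyq_ne : y ≠ q := fun h => hyp_na (by rw [h]; exact hpqadj)
          have hyq : G.Adj q y := hy1.resolve_left hyq_ne
          by_cases hxyadj : G.Adj x y
          · exact no_c4 hch hxp.symm hpqadj hyq hxyadj.symm
              (fun h => hxq_na h.symm) hyp_na hxq_ne (Ne.symm hyp_ne)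
          · by_cases hvx : G.Adj v x
            · by_cases hvy : G.Adj v y
              · exact key hxS hyS hxv hyv
                  (.cons hvx.symm (.cons hvy .nil))
                  (ec_len2 _ _ hxyadj hxy)
                  (by simp [SimpleGraph.Walk.support])
              · exact key hxS hyS hxv hyv
                  (.cons hvx.symm (.cons hqv (.cons hyq .nil)))
                  (ec_len3 _ _ _ (fun h => hxq_na h.symm) hxyadj hvy hxq_ne hxy (Ne.symm hyv))
                  (by simp [SimpleGraph.Walk.support])
            · by_cases hvy : G.Adj v y
              · exact key hxS hyS hxv hyv
                  (.cons hxp.symm (.cons hpv.symm (.cons hvy .nil)))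
                  (ec_len3 _ _ _ (fun h => hvx h.symm) hxyadj hyp_na hxv hxy (Ne.symm hyp_ne))
                  (by simp [SimpleGraph.Walk.support])
              · exact key hxS hyS hxv hyv
                  (.cons hxp.symm (.cons hpv.symm (.cons hqv (.cons hyq .nil))))
                  (ec_len4 _ _ _ _ (fun h => hvx h.symm) (fun h => hxq_na h.symm) hxyadj
                    hyp_na hvy hxv hxq_ne hxy hpq (Ne.symm hyp_ne) (Ne.symm hyv))
                  (by simp [SimpleGraph.Walk.support])
        · exact key hpS hqS hpv.ne' hqv.ne'
            (.cons hpv.symm (.cons hqv .nil))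
            (ec_len2 _ _ hpqadj hpq)
            (by simp [SimpleGraph.Walk.support])
  · -- simple → extreme
    intro hsimp
    intro a b ha hb w hw x hx
    have hsub : ∀ z ∈ w.support, z ∈ S := hS ha.1 hb.1 w hw
    refine ⟨hsub x hx, ?_⟩
    simp only [Set.mem_singleton_iff]
    intro heq
    rw [heq] at hx
    -- now v ∈ w.support
    obtain ⟨k, hkv, hk⟩ := SimpleGraph.Walk.mem_support_iff_exists_getVert.mp hx
    have hav : a ≠ v := by simpa using ha.2
    have hbv : b ≠ v := by simpa using hb.2
    have hk0 : k ≠ 0 := by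
      intro h; rw [h, SimpleGraph.Walk.getVert_zero] at hkv; exact hav hkv
    have hkl : k ≠ w.length := by
      intro h; rw [h, SimpleGraph.Walk.getVert_length] at hkv; exact hbv hkv
    have h1 : G.Adj (w.getVert (k - 1)) v := by
      have := w.adj_getVert_succ (i := k - 1) (by omega)
      rwa [show k - 1 + 1 = k by omega, hkv] at this
    have h2 : G.Adj v (w.getVert (k + 1)) := by
      have := w.adj_getVert_succ (i := k) (by omega)
      rwa [hkv] at this
    have hpS : w.getVert (k - 1) ∈ S := hsub _ (getVert_mem_support' w (by omega))
    have hnS : w.getVert (k + 1) ∈ S := hsub _ (getVert_mem_support' w (by omega))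
    rcases hsimp ⟨_, hpS⟩ ((mem_cN hpS hv).mpr (Or.inr h1.symm))
        ⟨_, hnS⟩ ((mem_cN hnS hv).mpr (Or.inr h2)) with hincl | hincl
    · by_cases hk1 : k = 1
      · -- the start vertex is adjacent to getVert 2 : forbidden chord at the endpoint
        have hself : (⟨_, hpS⟩ : S) ∈ closedNbhd (G.induce S) ⟨_, hpS⟩ :=
          (mem_cN hpS hpS).mpr (Or.inl rfl)
        have := (mem_cN hpS hnS).mp (hincl hself)
        have hne : w.getVert (k - 1) ≠ w.getVert (k + 1) :=
          getVert_ne_of_isPath hw.1 (by omega) (by omega) (by omega)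
        have hadj : G.Adj (w.getVert (k - 1)) (w.getVert (k + 1)) :=
          (this.resolve_left hne).symm
        have := chord_fact hw (i := k - 1) (j := k + 1) (by omega) (by omega) hadj
        omega
      · -- chord from getVert (k-2) to getVert (k+1): odd chord
        have hzadj : G.Adj (w.getVert (k - 2)) (w.getVert (k - 1)) := by
          have := w.adj_getVert_succ (i := k - 2) (by omega)
          rwa [show k - 2 + 1 = k - 1 by omega] at this
        have hzS : w.getVert (k - 2) ∈ S := hsub _ (getVert_mem_support' w (by omega))
        have hmem : (⟨_, hzS⟩ : S) ∈ closedNbhd (G.induce S) ⟨_, hpS⟩ :=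
          (mem_cN hzS hpS).mpr (Or.inr hzadj.symm)
        have := (mem_cN hzS hnS).mp (hincl hmem)
        have hne : w.getVert (k - 2) ≠ w.getVert (k + 1) :=
          getVert_ne_of_isPath hw.1 (by omega) (by omega) (by omega)
        have hadj : G.Adj (w.getVert (k - 2)) (w.getVert (k + 1)) :=
          (this.resolve_left hne).symm
        have hcf := chord_fact hw (i := k - 2) (j := k + 1) (by omega) (by omega) hadj
        obtain ⟨⟨r, hr⟩, -⟩ := hcf
        omega
    · by_cases hk2 : k + 1 = w.length
      · have hself : (⟨_, hnS⟩ : S) ∈ closedNbhd (G.induce S) ⟨_, hnS⟩ :=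
          (mem_cN hnS hnS).mpr (Or.inl rfl)
        have := (mem_cN hnS hpS).mp (hincl hself)
        have hne : w.getVert (k + 1) ≠ w.getVert (k - 1) :=
          getVert_ne_of_isPath hw.1 (by omega) (by omega) (by omega)
        have hadj : G.Adj (w.getVert (k - 1)) (w.getVert (k + 1)) :=
          (this.resolve_left hne)
        have := chord_fact hw (i := k - 1) (j := k + 1) (by omega) (by omega) hadj
        omega
      · have hzadj : G.Adj (w.getVert (k + 1)) (w.getVert (k + 2)) := by
          have := w.adj_getVert_succ (i := k + 1) (by omega)
          rwa [show k + 1 + 1 = k + 2 by omega] at this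
        have hzS : w.getVert (k + 2) ∈ S := hsub _ (getVert_mem_support' w (by omega))
        have hmem : (⟨_, hzS⟩ : S) ∈ closedNbhd (G.induce S) ⟨_, hnS⟩ :=
          (mem_cN hzS hnS).mpr (Or.inr hzadj)
        have := (mem_cN hzS hpS).mp (hincl hmem)
        have hne : w.getVert (k + 2) ≠ w.getVert (k - 1) :=
          getVert_ne_of_isPath hw.1 (by omega) (by omega) (by omega)
        have hadj : G.Adj (w.getVert (k - 1)) (w.getVert (k + 2)) :=
          (this.resolve_left hne)
        have hcf := chord_fact hw (i := k - 1) (j := k + 2) (by omega) (by omega) hadj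
        obtain ⟨⟨r, hr⟩, -⟩ := hcf
        omega
end

section
/- Let G be a finite connected simple graph and let S be a convex set of G with respect to the toll convexity. If v is an extreme vertex of S, then v is a simplicial vertex of the induced subgraph G[S]. -/
open SimpleGraph

variable {V : Type*} {W : Type*}

lemma toll_key {V : Type*} (G : SimpleGraph V)
    (S : Set V) (v : V)
    (hext : PConvex G (fun _ _ w => IsTolledWalk G w) (S \ {v}))
    (x y : V) (hx : x ∈ S) (hy : y ∈ S) (hxne : x ≠ v) (hyne : y ≠ v)
    (hxv : G.Adj x v) (hvy : G.Adj v y)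
    (hxy : ¬ G.Adj x y) : False := by
  have hxS : x ∈ S \ {v} := ⟨hx, hxne⟩
  have hyS : y ∈ S \ {v} := ⟨hy, hyne⟩
  set w : G.Walk x y := Walk.cons hxv (Walk.cons hvy Walk.nil) with hw
  have hsupp : w.support = [x, v, y] := by simp [hw]
  have htoll : IsTolledWalk G w := by
    intro i hi
    simp only [hw, Walk.support_cons, Walk.support_nil, List.length_cons,
      List.length_nil] at hi ⊢
    interval_cases i <;>
      constructor <;> intro h <;> simp_all <;>
        first
          | exact absurd h (G.irrefl)
          | exact absurd h hxy
          | rfl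
  have := hext hxS hyS w htoll v (by rw [hsupp]; simp)
  exact this.2 rfl

/-- If `v` is an extreme vertex of a toll convex set `S` of a finite connected
graph `G`, then `v` is simplicial in `G[S]`. -/
theorem toll_extreme_is_simplicial
    {V : Type*} [Fintype V] (G : SimpleGraph V) (hconn : G.Connected)
    (S : Set V) (hS : PConvex G (fun _ _ w => IsTolledWalk G w) S) (v : V) (hv : v ∈ S)
    (hext : PConvex G (fun _ _ w => IsTolledWalk G w) (S \ {v})) :
    SimplicialVtx (G.induce S) ⟨v, hv⟩ := by
  intro a ha b hb hab
  simp only [closedNbhd, Set.mem_insert_iff, SimpleGraph.mem_neighborSet] at ha hb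
  rcases ha with ha | ha
  · rcases hb with hb | hb
    · exact absurd (ha.trans hb.symm) hab
    · exact ha ▸ hb
  · rcases hb with hb | hb
    · exact hb ▸ ha.symm
    · -- both adjacent to v in the induced graph
      have hav : G.Adj (↑a) v := by exact_mod_cast ha.symm
      have hvb : G.Adj v (↑b) := by exact_mod_cast hb
      by_contra hnadj
      have hnadj' : ¬ G.Adj (↑a) (↑b) := by
        intro h
        exact hnadj (by exact_mod_cast h)
      have hane : (↑a : V) ≠ v := hav.ne
      have hbne : (↑b : V) ≠ v := hvb.ne'
      exact toll_key G S v hext (↑a) (↑b) a.2 b.2 hane hbne hav hvb hnadj'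
end

section
/- Let G be a finite connected simple graph and let S be a convex set of G with respect to the weakly toll convexity. If v is an extreme vertex of S, then v is a simplicial vertex of the induced subgraph G[S]. -/
open SimpleGraph

variable {V : Type*} {W : Type*}

/-- If `v` is an extreme vertex of a weakly toll convex set `S` of a finite
connected graph `G`, then `v` is simplicial in `G[S]`. -/
theorem weakly_toll_extreme_is_simplicial
    {V : Type*} [Fintype V] (G : SimpleGraph V) (hconn : G.Connected)
    (S : Set V) (hS : PConvex G (fun _ _ w => IsWeaklyTollWalk G w) S) (v : V) (hv : v ∈ S)
    (hext : PConvex G (fun _ _ w => IsWeaklyTollWalk G w) (S \ {v})) :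
    SimplicialVtx (G.induce S) ⟨v, hv⟩ := by
  intro x hx y hy hxy
  -- adjacency in induced graph
  have adj_ind : ∀ p q : S, (G.induce S).Adj p q ↔ G.Adj p q := by
    intro p q; simp [SimpleGraph.induce]
  rw [adj_ind]
  -- reduce to the key fact about neighbors of v
  have key : ∀ a b : V, G.Adj v a → G.Adj v b → a ∈ S → b ∈ S → a ≠ b → G.Adj a b := by
    intro a b hva hvb haS hbS hne
    by_contra hab
    have hav : G.Adj a v := hva.symm
    let w : G.Walk a b := SimpleGraph.Walk.cons hav (SimpleGraph.Walk.cons hvb SimpleGraph.Walk.nil)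
    have hwt : IsWeaklyTollWalk G w := by
      intro i hi
      simp only [w, SimpleGraph.Walk.support_cons, SimpleGraph.Walk.support_nil,
        List.length_cons, List.length_nil] at hi ⊢
      interval_cases i <;> constructor <;> intro h <;>
        simp_all [G.irrefl, G.ne_of_adj h]
    have haS' : a ∈ S \ {v} := ⟨haS, fun h => G.irrefl (h ▸ hva)⟩
    have hbS' : b ∈ S \ {v} := ⟨hbS, fun h => G.irrefl (h ▸ hvb)⟩
    have hvmem : v ∈ w.support := by simp [w]
    have : v ∈ S \ {v} := hext haS' hbS' w hwt v hvmem
    exact this.2 rfl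
  -- case analysis on whether x or y equals v
  rcases hx with hx | hx
  · subst hx
    rcases hy with hy | hy
    · exact absurd hy.symm hxy
    · exact (adj_ind _ _).mp hy
  · rcases hy with hy | hy
    · subst hy
      exact ((adj_ind _ _).mp hx).symm
    · have hvx : G.Adj v x := (adj_ind _ _).mp hx
      have hvy : G.Adj v y := (adj_ind _ _).mp hy
      exact key x y hvx hvy x.2 y.2 (fun h => hxy (Subtype.ext h))
end

section
/- A finite connected simple graph G is a convex geometry with respect to the l²-convexity if and only if G is a chordal cograph. -/
open SimpleGraph

variable {V : Type*} {W : Type*}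

lemma infix_pair3 {x y a b c : V} (h : [x, y] <:+: [a, b, c]) :
    (x = a ∧ y = b) ∨ (x = b ∧ y = c) := by
  obtain ⟨s, t, hst⟩ := h
  match s with
  | [] => simp at hst; exact Or.inl ⟨hst.1, hst.2.1⟩
  | [e] => simp at hst; exact Or.inr ⟨hst.2.1, hst.2.2.1⟩
  | e :: f :: s' =>
    have := congrArg List.length hst
    simp at this; omega

lemma inducedP3 {G : SimpleGraph V} {u x v : V} (h1 : G.Adj u x) (h2 : G.Adj x v)
    (hne : u ≠ v) (hna : ¬ G.Adj u v) :
    IsInducedPathW G (Walk.cons h1 (Walk.cons h2 Walk.nil)) := by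
  have hux := h1.ne
  have hxv := h2.ne
  constructor
  · refine ⟨⟨?_⟩, ?_⟩
    · simp [Sym2.eq_iff]
      tauto
    · simp [Walk.support_cons]
      tauto
  · intro z hz y hy hadj
    simp [Walk.support_cons] at hz hy
    unfold consecIn
    simp only [Walk.support_cons, Walk.support_nil] at *
    rcases hz with rfl | rfl | rfl <;> rcases hy with rfl | rfl | rfl <;>
      first
        | exact absurd hadj G.irrefl
        | exact absurd hadj hna
        | exact absurd hadj (fun h => hna h.symm)
        | exact Or.inl ⟨[], [_], rfl⟩
        | exact Or.inr ⟨[], [_], rfl⟩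
        | exact Or.inl (List.IsSuffix.isInfix ⟨[_], rfl⟩)
        | exact Or.inr (List.IsSuffix.isInfix ⟨[_], rfl⟩)

lemma length_le_two_cases {G : SimpleGraph V} : ∀ {u v : V} (w : G.Walk u v), w.length ≤ 2 →
    (w.length = 0) ∨ (w.length = 1) ∨ (w.length = 2) := by
  intro u v w h; omega

lemma cvx_iff (G : SimpleGraph V) (S : Set V) :
    PConvex G (fun _ _ w => IsInducedPathW G w ∧ w.length ≤ 2) S ↔
      ∀ u v x : V, u ∈ S → v ∈ S → u ≠ v → ¬ G.Adj u v → G.Adj u x → G.Adj x v → x ∈ S := by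
  constructor
  · intro h u v x hu hv hne hna h1 h2
    exact h hu hv _ ⟨inducedP3 h1 h2 hne hna, by simp⟩ x (by simp)
  · intro h u v hu hv w hw x hx
    obtain ⟨⟨hpath, hind⟩, hlen⟩ := hw
    match w with
    | .nil => simp at hx; subst hx; exact hu
    | .cons h1 .nil =>
      simp [Walk.support_cons] at hx
      rcases hx with rfl | rfl
      exacts [hu, hv]
    | .cons (v := m) h1 (.cons h2 .nil) =>
      simp only [Walk.support_cons, Walk.support_nil, List.mem_cons, List.mem_singleton, List.not_mem_nil, or_false] at hx hind
      have hnodup := hpath.support_nodup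
      simp only [Walk.support_cons, Walk.support_nil, List.nodup_cons, List.mem_cons] at hnodup
      rcases hx with rfl | rfl | rfl
      · exact hu
      · have hne : u ≠ v := by tauto
        have hna : ¬ G.Adj u v := by
          intro hadj
          have hc := hind u (by simp) v (by simp) hadj
          rcases hc with hinf | hinf
          · rcases infix_pair3 hinf with ⟨_, h'⟩ | ⟨h', _⟩ <;> tauto
          · rcases infix_pair3 hinf with ⟨h', h''⟩ | ⟨h', _⟩ <;> tauto
        exact h u v x hu hv hne hna h1 h2
      · exact hv
    | .cons _ (.cons _ (.cons _ _)) => simp [Walk.length_cons] at hlen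

lemma not_chordal_of_c4 {G : SimpleGraph V} {p q r s : V} (hpq : G.Adj p q) (hqr : G.Adj q r)
    (hrs : G.Adj r s) (hsp : G.Adj s p) (hpr : ¬ G.Adj p r) (hqs : ¬ G.Adj q s)
    (hpr' : p ≠ r) (hqs' : q ≠ s) : ¬ Chordal G := by
  intro hch
  apply hch
  have h1 := hpq.ne
  have h2 := hqr.ne
  have h3 := hrs.ne
  have h4 := hsp.ne
  refine ⟨p, Walk.cons hpq (Walk.cons hqr (Walk.cons hrs (Walk.cons hsp Walk.nil))), ⟨?_, ?_⟩, by simp⟩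
  · refine ⟨⟨⟨?_⟩, by simp⟩, ?_⟩
    · simp [Sym2.eq_iff]
      constructor
      · tauto
      constructor
      · tauto
      tauto
    · simp only [Walk.support_cons, Walk.support_nil, List.tail_cons]
      simp
      tauto
  · intro x hx y hy hadj
    unfold consecIn
    simp only [Walk.support_cons, Walk.support_nil, List.mem_cons, List.not_mem_nil,
      List.mem_singleton, or_false] at hx hy ⊢
    rcases hx with rfl | rfl | rfl | rfl | rfl <;> rcases hy with rfl | rfl | rfl | rfl | rfl <;>
      first
        | exact absurd hadj G.irrefl
        | exact absurd hadj hpr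
        | exact absurd hadj hqs
        | exact absurd hadj (fun h => hpr h.symm)
        | exact absurd hadj (fun h => hqs h.symm)
        | exact Or.inl ⟨[], [_, _, _], rfl⟩
        | exact Or.inr ⟨[], [_, _, _], rfl⟩
        | exact Or.inl ⟨[_], [_, _], rfl⟩
        | exact Or.inr ⟨[_], [_, _], rfl⟩
        | exact Or.inl ⟨[_, _], [_], rfl⟩
        | exact Or.inr ⟨[_, _], [_], rfl⟩
        | exact Or.inl (List.IsSuffix.isInfix ⟨[_, _, _], rfl⟩)
        | exact Or.inr (List.IsSuffix.isInfix ⟨[_, _, _], rfl⟩)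

lemma mem_closedNbhd {G : SimpleGraph V} {a x : V} :
    x ∈ closedNbhd G a ↔ x = a ∨ G.Adj a x := by
  simp [closedNbhd]

lemma nested {G : SimpleGraph V} (hch : Chordal G)
    (hp4 : ∀ a b c d : V, ¬ InducedP4 G a b c d) {a b : V} (hab : G.Adj a b) :
    closedNbhd G a ⊆ closedNbhd G b ∨ closedNbhd G b ⊆ closedNbhd G a := by
  by_contra hcon
  push_neg at hcon
  obtain ⟨h1, h2⟩ := hcon
  rw [Set.not_subset] at h1 h2
  obtain ⟨x, hxa, hxb⟩ := h1
  obtain ⟨y, hyb, hya⟩ := h2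
  rw [mem_closedNbhd] at hxa hyb
  rw [mem_closedNbhd, not_or] at hxb hya
  have hax : G.Adj a x := by
    rcases hxa with rfl | h
    · exact absurd hab.symm hxb.2
    · exact h
  have hby : G.Adj b y := by
    rcases hyb with rfl | h
    · exact absurd hab hya.2
    · exact h
  have hxy : x ≠ y := fun h => hya.2 (h ▸ hax)
  by_cases hadj : G.Adj x y
  · exact not_chordal_of_c4 hax hadj hby.symm hab.symm
      (fun h => hya.2 h) (fun h => hxb.2 h.symm) (fun h => hya.1 h.symm)
      (fun h => hxb.1 h) hch
  · exact hp4 x a b y ⟨hax.symm, hab, hby, fun h => hxb.2 h.symm, hadj, fun h => hya.2 h⟩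

lemma direction2 [Fintype V] {G : SimpleGraph V} (hch : Chordal G)
    (hp4 : ∀ a b c d : V, ¬ InducedP4 G a b c d) :
    IsConvexGeometry (PConvex G fun _ _ w => IsInducedPathW G w ∧ w.length ≤ 2) := by
  classical
  intro S hS
  apply Set.Subset.antisymm
  · intro z hz
    rw [chull, Set.mem_sInter]
    rintro T ⟨hET, hTc⟩
    -- work with T' = T ∩ S
    set T' : Set V := T ∩ S with hT'
    have hT'c : PConvex G (fun _ _ w => IsInducedPathW G w ∧ w.length ≤ 2) T' :=
      fun u v hu hv w hw x hx => ⟨hTc hu.1 hv.1 w hw x hx, hS hu.2 hv.2 w hw x hx⟩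
    have hmain : ∀ y ∈ S, y ∈ T' := by
      by_contra hcon
      push_neg at hcon
      have hBne : {x | x ∈ S ∧ x ∉ T'}.Nonempty := by
        obtain ⟨y, hy1, hy2⟩ := hcon; exact ⟨y, hy1, hy2⟩
      obtain ⟨x, ⟨hxS, hxT⟩, hmin⟩ :=
        Set.exists_min_image {x | x ∈ S ∧ x ∉ T'} (fun x => (closedNbhd G x).ncard)
          (Set.toFinite _) hBne
      have hxE : x ∉ extremeSet (PConvex G fun _ _ w => IsInducedPathW G w ∧ w.length ≤ 2) S := by
        intro hE
        exact hxT ⟨hET hE, hxS⟩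
      have hnc : ¬ PConvex G (fun _ _ w => IsInducedPathW G w ∧ w.length ≤ 2) (S \ {x}) := by
        intro hc
        exact hxE ⟨hxS, hc⟩
      rw [cvx_iff] at hnc
      push_neg at hnc
      obtain ⟨u, v, m, hu, hv, hne, hna, h1, h2, hm⟩ := hnc
      -- m ∈ S by convexity of S, hence m = x
      have hmS : m ∈ S := (cvx_iff G S).mp hS u v m hu.1 hv.1 hne hna h1 h2
      have hmx : m = x := by
        by_contra hmx
        exact hm ⟨hmS, hmx⟩
      subst hmx
      -- u and v have strictly smaller closed neighborhoods
      have smaller : ∀ p p' : V, G.Adj p m → G.Adj m p' → ¬ G.Adj p p' → p ≠ p' →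
          (closedNbhd G p).ncard < (closedNbhd G m).ncard := by
        intro p p' hp hp' hnpp hnep
        have hsub : closedNbhd G p ⊆ closedNbhd G m := by
          rcases nested hch hp4 hp with h | h
          · exact h
          · exfalso
            have : p' ∈ closedNbhd G m := mem_closedNbhd.mpr (Or.inr hp')
            have hp'' := h this
            rw [mem_closedNbhd] at hp''
            rcases hp'' with rfl | h'
            · exact hnep rfl
            · exact hnpp h'
        have hss : closedNbhd G p ⊂ closedNbhd G m := by
          refine hsub.ssubset_of_ne ?_
          intro he
          have : p' ∈ closedNbhd G p := he ▸ mem_closedNbhd.mpr (Or.inr hp')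
          rw [mem_closedNbhd] at this
          rcases this with rfl | h'
          · exact hnep rfl
          · exact hnpp h'
        exact Set.ncard_lt_ncard hss (Set.toFinite _)
      have hu' : u ∈ T' := by
        by_contra hcon'
        have := hmin u ⟨hu.1, hcon'⟩
        have := smaller u v h1 h2 hna hne
        omega
      have hv' : v ∈ T' := by
        by_contra hcon'
        have := hmin v ⟨hv.1, hcon'⟩
        have := smaller v u h2.symm h1.symm (fun h => hna h.symm) (Ne.symm hne)
        omega
      exact hxT ((cvx_iff G T').mp hT'c u v m hu' hv' hne hna h1 h2)
    exact (hmain z hz).1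
  · exact Set.sInter_subset_of_mem ⟨fun e he => he.1, hS⟩

lemma cvx_empty (G : SimpleGraph V) :
    PConvex G (fun _ _ w => IsInducedPathW G w ∧ w.length ≤ 2) (∅ : Set V) := by
  intro u v hu; exact absurd hu (Set.notMem_empty u)

lemma cvx_univ (G : SimpleGraph V) :
    PConvex G (fun _ _ w => IsInducedPathW G w ∧ w.length ≤ 2) (Set.univ : Set V) := by
  intro u v _ _ w _ x _; trivial

lemma cvx_singleton (G : SimpleGraph V) (a : V) :
    PConvex G (fun _ _ w => IsInducedPathW G w ∧ w.length ≤ 2) ({a} : Set V) := by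
  rw [cvx_iff]
  intro u v x hu hv hne _ _ _
  exact absurd (hu.trans hv.symm) hne

lemma not_cg_of_c4 [Fintype V] {G : SimpleGraph V} {p q r s : V} (hpq : G.Adj p q)
    (hqr : G.Adj q r) (hrs : G.Adj r s) (hsp : G.Adj s p)
    (hpr : ¬ G.Adj p r) (hqs : ¬ G.Adj q s) (hpr' : p ≠ r) (hqs' : q ≠ s) :
    ¬ IsConvexGeometry (PConvex G fun _ _ w => IsInducedPathW G w ∧ w.length ≤ 2) := by
  classical
  intro hCG
  set Fam : Set (Set V) := {T | PConvex G (fun _ _ w => IsInducedPathW G w ∧ w.length ≤ 2) T ∧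
    ∃ p' q' r' s' : V, (p' ∈ T ∧ q' ∈ T ∧ r' ∈ T ∧ s' ∈ T) ∧
      G.Adj p' q' ∧ G.Adj q' r' ∧ G.Adj r' s' ∧ G.Adj s' p' ∧
      ¬ G.Adj p' r' ∧ ¬ G.Adj q' s' ∧ p' ≠ r' ∧ q' ≠ s'} with hFam
  have hFamne : Fam.Nonempty :=
    ⟨Set.univ, cvx_univ G, p, q, r, s, ⟨trivial, trivial, trivial, trivial⟩,
      hpq, hqr, hrs, hsp, hpr, hqs, hpr', hqs'⟩
  obtain ⟨T, hTmem, hmin⟩ := Set.exists_min_image Fam Set.ncard (Set.toFinite _) hFamne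
  obtain ⟨hTc, p', q', r', s', ⟨hp', hq', hr', hs'⟩, h1, h2, h3, h4, h5, h6, h7, h8⟩ := hTmem
  have hTeq := hCG T hTc
  -- every extreme point is in the pattern, but no pattern vertex is extreme
  have hE : extremeSet (PConvex G fun _ _ w => IsInducedPathW G w ∧ w.length ≤ 2) T ⊆ ∅ := by
    rintro e ⟨heT, heC⟩
    exfalso
    have hTe : T \ {e} ∉ Fam := by
      intro hmem
      have := hmin _ hmem
      have := Set.ncard_diff_singleton_lt_of_mem heT (Set.toFinite T)
      omega
    have hepat : e = p' ∨ e = q' ∨ e = r' ∨ e = s' := by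
      by_contra hcon
      push_neg at hcon
      obtain ⟨e1, e2, e3, e4⟩ := hcon
      exact hTe ⟨heC, p', q', r', s',
        ⟨⟨hp', fun h => e1 h.symm⟩, ⟨hq', fun h => e2 h.symm⟩, ⟨hr', fun h => e3 h.symm⟩,
          ⟨hs', fun h => e4 h.symm⟩⟩, h1, h2, h3, h4, h5, h6, h7, h8⟩
    have hcx := (cvx_iff G (T \ {e})).mp heC
    rcases hepat with rfl | rfl | rfl | rfl
    · exact ((hcx q' s' e ⟨hq', fun h => h1.ne ((Set.mem_singleton_iff.mp h)).symm⟩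
        ⟨hs', fun h => h4.ne ((Set.mem_singleton_iff.mp h))⟩ h8 h6 h1.symm h4.symm).2 rfl)
    · exact ((hcx p' r' e ⟨hp', fun h => h1.ne ((Set.mem_singleton_iff.mp h))⟩
        ⟨hr', fun h => h2.ne ((Set.mem_singleton_iff.mp h)).symm⟩ h7 h5 h1 h2).2 rfl)
    · exact ((hcx q' s' e ⟨hq', fun h => h2.ne ((Set.mem_singleton_iff.mp h))⟩
        ⟨hs', fun h => h3.ne ((Set.mem_singleton_iff.mp h)).symm⟩ h8 h6 h2 h3).2 rfl)
    · exact ((hcx r' p' e ⟨hr', fun h => h3.ne ((Set.mem_singleton_iff.mp h))⟩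
        ⟨hp', fun h => h4.ne ((Set.mem_singleton_iff.mp h)).symm⟩ (Ne.symm h7)
        (fun h => h5 h.symm) h3 h4).2 rfl)
  have : p' ∈ (∅ : Set V) := by
    have hmem : p' ∈ chull (PConvex G fun _ _ w => IsInducedPathW G w ∧ w.length ≤ 2)
        (extremeSet (PConvex G fun _ _ w => IsInducedPathW G w ∧ w.length ≤ 2) T) :=
      hTeq ▸ hp'
    exact hmem _ ⟨fun e he => absurd (hE he) (Set.notMem_empty e), cvx_empty G⟩
  exact this

lemma not_cg_of_p4 [Fintype V] {G : SimpleGraph V} {a b c d : V} (hP4 : InducedP4 G a b c d) :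
    ¬ IsConvexGeometry (PConvex G fun _ _ w => IsInducedPathW G w ∧ w.length ≤ 2) := by
  classical
  intro hCG
  set Fam : Set (Set V) := {T | PConvex G (fun _ _ w => IsInducedPathW G w ∧ w.length ≤ 2) T ∧
    ∃ a' b' c' d' : V, (a' ∈ T ∧ b' ∈ T ∧ c' ∈ T ∧ d' ∈ T) ∧ InducedP4 G a' b' c' d'} with hFam
  have hFamne : Fam.Nonempty :=
    ⟨Set.univ, cvx_univ G, a, b, c, d, ⟨trivial, trivial, trivial, trivial⟩, hP4⟩
  obtain ⟨T, hTmem, hmin⟩ := Set.exists_min_image Fam Set.ncard (Set.toFinite _) hFamne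
  obtain ⟨hTc, a', b', c', d', ⟨ha', hb', hc', hd'⟩, hpat⟩ := hTmem
  obtain ⟨h1, h2, h3, h4, h5, h6⟩ := hpat
  -- distinctness
  have hac : a' ≠ c' := fun h => h5 (h.symm ▸ h3)
  have had : a' ≠ d' := fun h => h4 ((h.symm ▸ h3 : G.Adj c' a').symm)
  have hbd : b' ≠ d' := fun h => h5 (h ▸ h1)
  have hab : a' ≠ b' := h1.ne
  have hbc : b' ≠ c' := h2.ne
  have hcd : c' ≠ d' := h3.ne
  have hTeq := hCG T hTc
  set E := extremeSet (PConvex G fun _ _ w => IsInducedPathW G w ∧ w.length ≤ 2) T with hEdef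
  have hTcx := (cvx_iff G T).mp hTc
  -- every extreme point is a' or d'
  have hE : E ⊆ {a', d'} := by
    rintro e ⟨heT, heC⟩
    have hTe : T \ {e} ∉ Fam := by
      intro hmem
      have := hmin _ hmem
      have := Set.ncard_diff_singleton_lt_of_mem heT (Set.toFinite T)
      omega
    have hepat : e = a' ∨ e = b' ∨ e = c' ∨ e = d' := by
      by_contra hcon
      push_neg at hcon
      obtain ⟨e1, e2, e3, e4⟩ := hcon
      exact hTe ⟨heC, a', b', c', d',
        ⟨⟨ha', fun h => e1 (Set.mem_singleton_iff.mp h).symm⟩,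
         ⟨hb', fun h => e2 (Set.mem_singleton_iff.mp h).symm⟩,
         ⟨hc', fun h => e3 (Set.mem_singleton_iff.mp h).symm⟩,
         ⟨hd', fun h => e4 (Set.mem_singleton_iff.mp h).symm⟩⟩, h1, h2, h3, h4, h5, h6⟩
    have hcx := (cvx_iff G (T \ {e})).mp heC
    rcases hepat with rfl | rfl | rfl | rfl
    · exact Or.inl rfl
    · exfalso
      exact ((hcx a' c' e ⟨ha', fun h => hab (Set.mem_singleton_iff.mp h)⟩
        ⟨hc', fun h => hbc (Set.mem_singleton_iff.mp h).symm⟩ hac h4 h1 h2).2 rfl)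
    · exfalso
      exact ((hcx b' d' e ⟨hb', fun h => hbc (Set.mem_singleton_iff.mp h)⟩
        ⟨hd', fun h => hcd (Set.mem_singleton_iff.mp h).symm⟩ hbd h6 h2 h3).2 rfl)
    · exact Or.inr rfl
  have hbmem : ∀ W : Set V, E ⊆ W →
      PConvex G (fun _ _ w => IsInducedPathW G w ∧ w.length ≤ 2) W → b' ∈ W := by
    intro W hEW hWc
    have hmem : b' ∈ chull (PConvex G fun _ _ w => IsInducedPathW G w ∧ w.length ≤ 2) E :=
      hTeq ▸ hb'
    exact hmem _ ⟨hEW, hWc⟩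
  by_cases haE : a' ∈ E
  · -- a' extreme: N(a') ∩ T is a clique
    have haclique : ∀ z z' : V, z ∈ T → z' ∈ T → G.Adj a' z → G.Adj a' z' → z ≠ z' →
        G.Adj z z' := by
      intro z z' hz hz' hzadj hz'adj hzz
      by_contra hnadj
      obtain ⟨-, haC⟩ := haE
      have := ((cvx_iff G (T \ {a'})).mp haC z z' a'
        ⟨hz, fun h => hzadj.ne (Set.mem_singleton_iff.mp h).symm⟩
        ⟨hz', fun h => hz'adj.ne (Set.mem_singleton_iff.mp h).symm⟩ hzz hnadj
        hzadj.symm hz'adj).2 rfl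
      exact this
    set W : Set V := {a', d'} ∪ {z | z ∈ T ∧ G.Adj a' z ∧ G.Adj d' z} with hW
    have hWc : PConvex G (fun _ _ w => IsInducedPathW G w ∧ w.length ≤ 2) W := by
      rw [cvx_iff]
      rintro u v x hu hv hne hna hux hxv
      have hmemW : ∀ y : V, y ∈ W → y = a' ∨ y = d' ∨ (y ∈ T ∧ G.Adj a' y ∧ G.Adj d' y) := by
        intro y hy
        rcases hy with hy | hy
        · rcases hy with hy | hy
          · exact Or.inl hy
          · exact Or.inr (Or.inl hy)
        · exact Or.inr (Or.inr hy)
      rcases hmemW u hu with hu' | hu' | ⟨huT, hua, hud⟩ <;>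
        rcases hmemW v hv with hv' | hv' | ⟨hvT, hva, hvd⟩
      · exact absurd (hu'.trans hv'.symm) hne
      · have hxT : x ∈ T := hTcx a' d' x ha' hd' had h5 (hu' ▸ hux) (hv' ▸ hxv)
        exact Or.inr ⟨hxT, hu' ▸ hux, (hv' ▸ hxv).symm⟩
      · exact absurd (hu'.symm ▸ hva) hna
      · have hxT : x ∈ T := hTcx a' d' x ha' hd' had h5 (hv' ▸ hxv).symm (hu' ▸ hux).symm
        exact Or.inr ⟨hxT, (hv' ▸ hxv).symm, hu' ▸ hux⟩
      · exact absurd (hu'.trans hv'.symm) hne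
      · exact absurd (hu'.symm ▸ hvd) hna
      · exact absurd (hv'.symm ▸ hua.symm) hna
      · exact absurd (hv'.symm ▸ hud.symm) hna
      · exact absurd (haclique u v huT hvT hua hva hne) hna
    have hEW : E ⊆ W := fun e he => Or.inl (hE he)
    have hbW := hbmem W hEW hWc
    have hbcases : b' = a' ∨ b' = d' ∨ (b' ∈ T ∧ G.Adj a' b' ∧ G.Adj d' b') := by
      rcases hbW with hb | hb
      · rcases hb with hb | hb
        · exact Or.inl hb
        · exact Or.inr (Or.inl hb)
      · exact Or.inr (Or.inr hb)
    rcases hbcases with h | h | h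
    · exact hab h.symm
    · exact hbd h
    · exact h6 h.2.2.symm
  · -- a' not extreme: E ⊆ {d'}
    have hEd : E ⊆ {d'} := by
      intro e he
      rcases hE he with h | h
      · exact absurd (h ▸ he) haE
      · exact h
    have hbW := hbmem {d'} hEd (cvx_singleton G d')
    exact hbd (Set.mem_singleton_iff.mp hbW)

lemma support_getElem? {G : SimpleGraph V} : ∀ {u v : V} (w : G.Walk u v) (i : ℕ), i ≤ w.length →
    w.support[i]? = some (w.getVert i) := by
  intro u v w
  induction w with
  | nil =>
    intro i hi
    simp only [Walk.length_nil, Nat.le_zero] at hi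
    subst hi
    simp [Walk.getVert]
  | cons h p ih =>
    intro i hi
    cases i with
    | zero => simp [Walk.support_cons, Walk.getVert_zero]
    | succ n =>
      rw [Walk.support_cons, List.getElem?_cons_succ, Walk.getVert_cons_succ]
      exact ih n (by simpa [Walk.length_cons] using hi)

lemma cycle_getVert_inj {G : SimpleGraph V} {u : V} {w : G.Walk u u}
    (hn : w.support.tail.Nodup) {i j : ℕ} (hi : i ≤ w.length) (hj : j ≤ w.length)
    (h : w.getVert i = w.getVert j) :
    i = j ∨ (i = 0 ∧ j = w.length) ∨ (i = w.length ∧ j = 0) := by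
  have hsl : w.support.length = w.length + 1 := w.length_support
  have htl : w.support.tail.length = w.length := by
    rw [List.length_tail, hsl]; omega
  have htail : ∀ k : ℕ, 1 ≤ k → k ≤ w.length → w.support.tail[k-1]? = some (w.getVert k) := by
    intro k h1 h2
    rw [List.getElem?_tail]
    have : k - 1 + 1 = k := by omega
    rw [this]
    exact support_getElem? w k h2
  rcases Nat.eq_zero_or_pos i with rfl | hi1 <;> rcases Nat.eq_zero_or_pos j with rfl | hj1
  · exact Or.inl rfl
  · -- i = 0 : getVert 0 = u = getVert length
    right; left
    refine ⟨rfl, ?_⟩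
    have h0 : w.getVert j = w.getVert w.length := by
      rw [Walk.getVert_length, ← h, Walk.getVert_zero]
    have hL1 : 1 ≤ w.length := le_trans hj1 hj
    have e1 := htail j hj1 hj
    have e2 := htail w.length hL1 (le_refl _)
    rw [h0] at e1
    have := (List.getElem?_inj (by omega : j - 1 < w.support.tail.length) hn).mp (e1.trans e2.symm)
    omega
  · right; right
    refine ⟨?_, rfl⟩
    have h0 : w.getVert i = w.getVert w.length := by
      rw [Walk.getVert_length, h, Walk.getVert_zero]
    have hL1 : 1 ≤ w.length := le_trans hi1 hi
    have e1 := htail i hi1 hi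
    have e2 := htail w.length hL1 (le_refl _)
    rw [h0] at e1
    have := (List.getElem?_inj (by omega : i - 1 < w.support.tail.length) hn).mp (e1.trans e2.symm)
    omega
  · left
    have e1 := htail i hi1 hi
    have e2 := htail j hj1 hj
    rw [h] at e1
    have := (List.getElem?_inj (by omega : i - 1 < w.support.tail.length) hn).mp (e1.trans e2.symm)
    omega

lemma consec_index {l : List V} {x y : V} (h : consecIn l x y) :
    ∃ k, (l[k]? = some x ∧ l[k+1]? = some y) ∨ (l[k]? = some y ∧ l[k+1]? = some x) := by
  rcases h with ⟨s, t, rfl⟩ | ⟨s, t, rfl⟩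
  · rw [List.append_assoc]
    refine ⟨s.length, Or.inl ⟨?_, ?_⟩⟩
    · rw [List.getElem?_append_right (le_refl s.length)]
      simp
    · rw [List.getElem?_append_right (Nat.le_succ_of_le (le_refl s.length))]
      simp [Nat.succ_sub (le_refl s.length)]
  · rw [List.append_assoc]
    refine ⟨s.length, Or.inr ⟨?_, ?_⟩⟩
    · rw [List.getElem?_append_right (le_refl s.length)]
      simp
    · rw [List.getElem?_append_right (Nat.le_succ_of_le (le_refl s.length))]
      simp [Nat.succ_sub (le_refl s.length)]

lemma cycle_chord_index {G : SimpleGraph V} {u : V} {w : G.Walk u u}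
    (hcyc : w.IsCycle)
    (hind : ∀ x ∈ w.support, ∀ y ∈ w.support, G.Adj x y → consecIn w.support x y)
    {i j : ℕ} (hi : i ≤ w.length) (hj : j ≤ w.length)
    (hadj : G.Adj (w.getVert i) (w.getVert j)) :
    ∃ k, k + 1 ≤ w.length ∧
      (((k = i ∨ (k = 0 ∧ i = w.length) ∨ (k = w.length ∧ i = 0)) ∧
        (k+1 = j ∨ (k+1 = 0 ∧ j = w.length) ∨ (k+1 = w.length ∧ j = 0))) ∨
       ((k = j ∨ (k = 0 ∧ j = w.length) ∨ (k = w.length ∧ j = 0)) ∧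
        (k+1 = i ∨ (k+1 = 0 ∧ i = w.length) ∨ (k+1 = w.length ∧ i = 0)))) := by
  have hsl : w.support.length = w.length + 1 := w.length_support
  have hmi : w.getVert i ∈ w.support := by
    rw [List.mem_iff_getElem?]
    exact ⟨i, support_getElem? w i hi⟩
  have hmj : w.getVert j ∈ w.support := by
    rw [List.mem_iff_getElem?]
    exact ⟨j, support_getElem? w j hj⟩
  obtain ⟨k, hk⟩ := consec_index (hind _ hmi _ hmj hadj)
  have hkb : k + 1 ≤ w.length := by
    rcases hk with ⟨_, h2⟩ | ⟨_, h2⟩ <;>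
    · obtain ⟨hlt, -⟩ := List.getElem?_eq_some_iff.mp h2
      omega
  have ek := support_getElem? w k (by omega)
  have ek1 := support_getElem? w (k+1) (by omega)
  refine ⟨k, hkb, ?_⟩
  rcases hk with ⟨ha, hb⟩ | ⟨ha, hb⟩
  · left
    constructor
    · exact cycle_getVert_inj hcyc.support_nodup (by omega) hi
        (Option.some.injEq _ _ ▸ (ek.symm.trans ha))
    · exact cycle_getVert_inj hcyc.support_nodup (by omega) hj
        (Option.some.injEq _ _ ▸ (ek1.symm.trans hb))
  · right
    constructor
    · exact cycle_getVert_inj hcyc.support_nodup (by omega) hj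
        (Option.some.injEq _ _ ▸ (ek.symm.trans ha))
    · exact cycle_getVert_inj hcyc.support_nodup (by omega) hi
        (Option.some.injEq _ _ ▸ (ek1.symm.trans hb))

theorem l2_convex_geometry_iff_chordal_cograph'
    {V : Type*} [Fintype V] (G : SimpleGraph V) :
    IsConvexGeometry (PConvex G (fun _ _ w => IsInducedPathW G w ∧ w.length ≤ 2)) ↔
      (Chordal G ∧ ∀ a b c d : V, ¬ InducedP4 G a b c d) := by
  constructor
  · intro hCG
    have hp4 : ∀ a b c d : V, ¬ InducedP4 G a b c d := fun a b c d h => not_cg_of_p4 h hCG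
    refine ⟨?_, hp4⟩
    by_contra hch
    simp only [Chordal, not_not] at hch
    obtain ⟨u, w, ⟨hcyc, hind⟩, hlen⟩ := hch
    have hnodup := hcyc.support_nodup
    have hne : ∀ i j : ℕ, i ≤ w.length → j ≤ w.length →
        ¬(i = j ∨ (i = 0 ∧ j = w.length) ∨ (i = w.length ∧ j = 0)) →
        w.getVert i ≠ w.getVert j := by
      intro i j hi hj hn he
      exact hn (cycle_getVert_inj hnodup hi hj he)
    have hnadj : ∀ i j : ℕ, i ≤ w.length → j ≤ w.length →
        (∀ k, k + 1 ≤ w.length →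
          ¬(((k = i ∨ (k = 0 ∧ i = w.length) ∨ (k = w.length ∧ i = 0)) ∧
            (k+1 = j ∨ (k+1 = 0 ∧ j = w.length) ∨ (k+1 = w.length ∧ j = 0))) ∨
           ((k = j ∨ (k = 0 ∧ j = w.length) ∨ (k = w.length ∧ j = 0)) ∧
            (k+1 = i ∨ (k+1 = 0 ∧ i = w.length) ∨ (k+1 = w.length ∧ i = 0))))) →
        ¬ G.Adj (w.getVert i) (w.getVert j) := by
      intro i j hi hj hn hadj
      obtain ⟨k, hk1, hk2⟩ := cycle_chord_index hcyc hind hi hj hadj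
      exact hn k hk1 hk2
    have hadj01 : G.Adj (w.getVert 0) (w.getVert 1) := by
      simpa using w.adj_getVert_succ (show 0 < w.length by omega)
    have hadj12 : G.Adj (w.getVert 1) (w.getVert 2) := by
      simpa using w.adj_getVert_succ (show 1 < w.length by omega)
    have hadj23 : G.Adj (w.getVert 2) (w.getVert 3) := by
      simpa using w.adj_getVert_succ (show 2 < w.length by omega)
    by_cases h5 : 5 ≤ w.length
    · exact hp4 (w.getVert 0) (w.getVert 1) (w.getVert 2) (w.getVert 3)
        ⟨hadj01, hadj12, hadj23,
         hnadj 0 2 (by omega) (by omega) (by intro k hk; omega),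
         hnadj 0 3 (by omega) (by omega) (by intro k hk; omega),
         hnadj 1 3 (by omega) (by omega) (by intro k hk; omega)⟩
    · have h4 : w.length = 4 := by omega
      have hadj30 : G.Adj (w.getVert 3) (w.getVert 0) := by
        have h34 : G.Adj (w.getVert 3) (w.getVert 4) := by
          simpa using w.adj_getVert_succ (show 3 < w.length by omega)
        have e40 : w.getVert 4 = w.getVert 0 := by
          rw [Walk.getVert_zero, ← h4, Walk.getVert_length]
        rwa [e40] at h34
      exact not_cg_of_c4 hadj01 hadj12 hadj23 hadj30
        (hnadj 0 2 (by omega) (by omega) (by intro k hk; omega))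
        (hnadj 1 3 (by omega) (by omega) (by intro k hk; omega))
        (hne 0 2 (by omega) (by omega) (by omega))
        (hne 1 3 (by omega) (by omega) (by omega)) hCG
  · rintro ⟨hch, hp4⟩
    exact direction2 hch hp4


/-- A finite connected simple graph `G` is a convex geometry with respect to
the l²-convexity if and only if `G` is a chordal cograph. -/
theorem l2_convex_geometry_iff_chordal_cograph
    {V : Type*} [Fintype V] (G : SimpleGraph V) (hconn : G.Connected) :
    IsConvexGeometry (PConvex G (fun _ _ w => IsInducedPathW G w ∧ w.length ≤ 2)) ↔
      (Chordal G ∧ ∀ a b c d : V, ¬ InducedP4 G a b c d) :=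
  l2_convex_geometry_iff_chordal_cograph' G
end

section
/- Let k ≥ 2 be an integer. If a finite connected simple graph G is a convex geometry with respect to the l^k-convexity, then G is a chordal graph whose diameter is at most k. -/
open SimpleGraph

variable {V : Type*} {W : Type*}

section Aux

variable {G : SimpleGraph V}

lemma aux_pconvex_sInter {P : ∀ ⦃u v : V⦄, G.Walk u v → Prop} {F : Set (Set V)}
    (h : ∀ T ∈ F, PConvex G P T) : PConvex G P (⋂₀ F) := by
  intro u v hu hv w hw x hx
  rw [Set.mem_sInter] at hu hv ⊢
  intro T hT
  exact h T hT (hu T hT) (hv T hT) w hw x hx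

lemma aux_chull_pconvex {P : ∀ ⦃u v : V⦄, G.Walk u v → Prop} (A : Set V) :
    PConvex G P (chull (PConvex G P) A) :=
  aux_pconvex_sInter (fun _ hT => hT.2)

lemma aux_subset_chull (Cvx : Set V → Prop) (A : Set V) : A ⊆ chull Cvx A :=
  fun _ hx => Set.mem_sInter.2 fun _ hT => hT.1 hx

lemma aux_chull_min {Cvx : Set V → Prop} {A T : Set V} (h1 : A ⊆ T) (h2 : Cvx T) :
    chull Cvx A ⊆ T := fun _ hx => Set.mem_sInter.1 hx T ⟨h1, h2⟩

lemma aux_chull_mono {Cvx : Set V → Prop} {A B : Set V} (hAB : A ⊆ B) :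
    chull Cvx A ⊆ chull Cvx B :=
  fun _ hx => Set.mem_sInter.2 fun T hT => Set.mem_sInter.1 hx T ⟨hAB.trans hT.1, hT.2⟩

lemma aux_pconvex_empty {P : ∀ ⦃u v : V⦄, G.Walk u v → Prop} : PConvex G P (∅ : Set V) := by
  intro u v hu
  exact absurd hu (Set.notMem_empty u)

lemma aux_induced2 {a x b : V} (hax : G.Adj a x) (hxb : G.Adj x b) (hab : ¬ G.Adj a b)
    (hne : a ≠ b) : IsInducedPathW G (Walk.cons hax (Walk.cons hxb Walk.nil)) := by
  constructor
  · rw [Walk.isPath_def]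
    simp [hax.ne, hxb.ne, hne]
  · intro y hy z hz hyz
    simp only [Walk.support_cons, Walk.support_nil, List.mem_cons, List.mem_singleton,
      List.not_mem_nil, or_false] at hy hz
    unfold consecIn
    simp only [Walk.support_cons, Walk.support_nil]
    rcases hy with rfl | rfl | rfl <;> rcases hz with rfl | rfl | rfl
    · exact absurd rfl hyz.ne
    · exact Or.inl ⟨[], [b], rfl⟩
    · exact absurd hyz hab
    · exact Or.inr ⟨[], [b], rfl⟩
    · exact absurd rfl hyz.ne
    · exact Or.inl ⟨[a], [], by simp⟩
    · exact absurd hyz.symm hab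
    · exact Or.inr ⟨[a], [], by simp⟩
    · exact absurd rfl hyz.ne

lemma aux_key {k : ℕ} (hk : 2 ≤ k) {S : Set V} {x a b : V}
    (hconv : PConvex G (fun _ _ w => IsInducedPathW G w ∧ w.length ≤ k) (S \ {x}))
    (ha : a ∈ S) (hb : b ∈ S) (hax' : a ≠ x) (hbx' : b ≠ x)
    (hax : G.Adj a x) (hxb : G.Adj x b) (hab : ¬ G.Adj a b) (hne : a ≠ b) : False := by
  have h2 := aux_induced2 hax hxb hab hne
  have hmem : x ∈ S \ {x} := by
    refine hconv ⟨ha, hax'⟩ ⟨hb, hbx'⟩ (Walk.cons hax (Walk.cons hxb Walk.nil)) ⟨h2, ?_⟩ x ?_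
    · simpa using hk
    · simp
  exact hmem.2 rfl

lemma aux_exists_take {u v : V} (p : G.Walk u v) (n : ℕ) :
    ∃ w : G.Walk u (p.getVert n), w.length ≤ n := by
  induction p generalizing n with
  | nil => exact ⟨Walk.nil, by simp⟩
  | cons h q ih =>
    cases n with
    | zero => exact ⟨Walk.nil, by change 0 ≤ 0; omega⟩
    | succ m =>
      obtain ⟨w, hw⟩ := ih m
      exact ⟨Walk.cons h w, by change w.length + 1 ≤ m + 1; omega⟩

lemma aux_exists_drop {u v : V} (p : G.Walk u v) (n : ℕ) :
    ∃ w : G.Walk (p.getVert n) v, w.length ≤ p.length - n := by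
  induction p generalizing n with
  | nil => exact ⟨Walk.nil, by simp⟩
  | cons h q ih =>
    cases n with
    | zero => exact ⟨Walk.cons h q, by change q.length + 1 ≤ (Walk.cons h q).length - 0; simp⟩
    | succ m =>
      obtain ⟨w, hw⟩ := ih m
      exact ⟨w, hw.trans (by rw [Walk.length_cons]; omega)⟩

lemma aux_support_getElem? {u v : V} (p : G.Walk u v) :
    ∀ i, i ≤ p.length → p.support[i]? = some (p.getVert i) := by
  induction p with
  | nil =>
    intro i hi
    simp only [Walk.length_nil, Nat.le_zero] at hi
    subst hi
    simp [Walk.support_nil]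
  | cons h q ih =>
    intro i hi
    cases i with
    | zero => simp [Walk.support_cons]
    | succ m =>
      rw [Walk.support_cons, List.getElem?_cons_succ, Walk.getVert_cons_succ]
      exact ih m (by rw [Walk.length_cons] at hi; omega)

lemma aux_getVert_mem_support {u v : V} (p : G.Walk u v) (i : ℕ) :
    p.getVert i ∈ p.support := by
  by_cases h : i ≤ p.length
  · exact Walk.mem_support_iff_exists_getVert.mpr ⟨i, rfl, h⟩
  · rw [Walk.getVert_of_length_le p (by omega)]
    exact p.end_mem_support

lemma aux_cyc_inj {u0 : V} {w : G.Walk u0 u0} (hc : w.IsCycle) {i j : ℕ}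
    (hi : i ≤ w.length) (hj : j ≤ w.length) (hij : w.getVert i = w.getVert j) :
    i = j ∨ (i = 0 ∧ j = w.length) ∨ (i = w.length ∧ j = 0) := by
  have h3 := hc.three_le_length
  have hnd : w.support.tail.Nodup := hc.support_nodup
  have hlt : w.support.tail.length = w.length := by
    have := w.length_support
    rw [List.length_tail, this]
    omega
  have htg : ∀ m, 1 ≤ m → m ≤ w.length → w.support.tail[m-1]? = some (w.getVert m) := by
    intro m h1 h2
    have hs := aux_support_getElem? w m h2
    rw [w.support_eq_cons] at hs
    rw [show m = (m-1)+1 by omega] at hs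
    rw [List.getElem?_cons_succ] at hs
    rw [show (m-1)+1 = m by omega] at hs
    exact hs
  rcases Nat.eq_zero_or_pos i with hi0 | hi1 <;> rcases Nat.eq_zero_or_pos j with hj0 | hj1
  · omega
  · subst hi0
    have e : w.getVert w.length = w.getVert j := by
      rw [Walk.getVert_length]
      rw [Walk.getVert_zero] at hij
      exact hij
    have t1 := htg w.length (by omega) le_rfl
    have t2 := htg j hj1 hj
    rw [e] at t1
    have := (List.getElem?_inj (by rw [hlt]; omega) hnd).mp (t1.trans t2.symm)
    omega
  · subst hj0
    have e : w.getVert i = w.getVert w.length := by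
      rw [Walk.getVert_length]
      rw [Walk.getVert_zero] at hij
      exact hij
    have t1 := htg i hi1 hi
    have t2 := htg w.length (by omega) le_rfl
    rw [e] at t1
    have := (List.getElem?_inj (by rw [hlt]; omega) hnd).mp (t1.trans t2.symm)
    omega
  · have t1 := htg i hi1 hi
    have t2 := htg j hj1 hj
    rw [hij] at t1
    have := (List.getElem?_inj (by rw [hlt]; omega) hnd).mp (t1.trans t2.symm)
    omega

lemma aux_infix_getVert {u0 v0 : V} (w : G.Walk u0 v0) {s t : List V} {a b : V}
    (hst : w.support = s ++ a :: b :: t) :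
    w.getVert s.length = a ∧ w.getVert (s.length + 1) = b ∧ s.length + 1 ≤ w.length := by
  have hlen : w.support.length = s.length + (t.length + 2) := by
    rw [hst]
    simp only [List.length_append, List.length_cons]
    try omega
  have hls := w.length_support
  have hsl : s.length + 1 ≤ w.length := by omega
  have e1 : w.support[s.length]? = some a := by
    rw [hst, List.getElem?_append_right le_rfl]
    simp
  have e2 : w.support[s.length + 1]? = some b := by
    rw [hst, List.getElem?_append_right (by omega)]
    simp [show s.length + 1 - s.length = 1 by omega]
  have f1 := aux_support_getElem? w s.length (by omega)
  have f2 := aux_support_getElem? w (s.length + 1) hsl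
  rw [f1] at e1
  rw [f2] at e2
  exact ⟨Option.some.inj e1, Option.some.inj e2, hsl⟩

end Aux

/-- For `k ≥ 2`, if a finite connected simple graph `G` is a convex geometry
with respect to the l^k-convexity, then `G` is chordal with diameter at most `k`. -/
theorem lk_convex_geometry_chordal_and_diam_le
    {V : Type*} [Fintype V] (G : SimpleGraph V) (hconn : G.Connected) (k : ℕ) (hk : 2 ≤ k)
    (h : IsConvexGeometry (PConvex G (fun _ _ w => IsInducedPathW G w ∧ w.length ≤ k))) :
    Chordal G ∧ ∀ u v : V, G.dist u v ≤ k := by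
  set Cvx := PConvex G (fun _ _ w => IsInducedPathW G w ∧ w.length ≤ k) with hCvxdef
  constructor
  · -- Chordal
    rintro ⟨u0, w, ⟨hcyc, hind⟩, hlen4⟩
    have h3 := hcyc.three_le_length
    set A : Set V := {y | y ∈ w.support} with hA
    set S : Set V := chull Cvx A with hS
    have hScvx : Cvx S := by
      rw [hS, hCvxdef]
      exact aux_chull_pconvex A
    have hAS : A ⊆ S := by
      conv_rhs => rw [hS]
      exact aux_subset_chull Cvx A
    have hSeq := h S hScvx
    have hcons : ∀ a b : V, G.Adj a b → a ∈ w.support → b ∈ w.support →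
        ∃ q, q + 1 ≤ w.length ∧ ((w.getVert q = a ∧ w.getVert (q+1) = b) ∨
          (w.getVert q = b ∧ w.getVert (q+1) = a)) := by
      intro a b hadj ha hb
      have hcc := hind a ha b hb hadj
      unfold consecIn at hcc
      rcases hcc with ⟨s, t, hst⟩ | ⟨s, t, hst⟩
      · have hst' : w.support = s ++ a :: b :: t := by rw [← hst]; simp
        obtain ⟨e1, e2, e3⟩ := aux_infix_getVert w hst'
        exact ⟨s.length, e3, Or.inl ⟨e1, e2⟩⟩
      · have hst' : w.support = s ++ b :: a :: t := by rw [← hst]; simp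
        obtain ⟨e1, e2, e3⟩ := aux_infix_getVert w hst'
        exact ⟨s.length, e3, Or.inr ⟨e1, e2⟩⟩
    have hext : extremeSet Cvx S ⊆ (∅ : Set V) := by
      rintro x ⟨hxS, hxcvx⟩
      exfalso
      rw [hCvxdef] at hxcvx
      by_cases hxA : x ∈ A
      · have hxsup : x ∈ w.support := by rw [hA] at hxA; exact hxA
        obtain ⟨i0, hgi0, hi0le⟩ := Walk.mem_support_iff_exists_getVert.mp hxsup
        obtain ⟨i, hi1, hin, hgi⟩ : ∃ i, 1 ≤ i ∧ i ≤ w.length ∧ w.getVert i = x := by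
          rcases Nat.eq_zero_or_pos i0 with h0 | h0
          · refine ⟨w.length, by omega, le_rfl, ?_⟩
            rw [Walk.getVert_length]
            rw [h0, Walk.getVert_zero] at hgi0
            exact hgi0
          · exact ⟨i0, h0, hi0le, hgi0⟩
        obtain ⟨j, hj, hxb⟩ : ∃ j, ((i < w.length ∧ j = i + 1) ∨ (i = w.length ∧ j = 1)) ∧
            G.Adj x (w.getVert j) := by
          by_cases hin' : i = w.length
          · have h01 : G.Adj (w.getVert 0) (w.getVert 1) := w.adj_getVert_succ (by omega)
            have hx0 : w.getVert 0 = x := by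
              rw [Walk.getVert_zero, ← Walk.getVert_length w, ← hin']
              exact hgi
            rw [hx0] at h01
            exact ⟨1, Or.inr ⟨hin', rfl⟩, h01⟩
          · have hadj := w.adj_getVert_succ (show i < w.length by omega)
            rw [hgi] at hadj
            exact ⟨i + 1, Or.inl ⟨by omega, rfl⟩, hadj⟩
        have hax : G.Adj (w.getVert (i-1)) x := by
          have hadj := w.adj_getVert_succ (show i - 1 < w.length by omega)
          rw [show i - 1 + 1 = i by omega, hgi] at hadj
          exact hadj
        have hab : ¬ G.Adj (w.getVert (i-1)) (w.getVert j) := by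
          intro hadj
          obtain ⟨q, hq, hcase⟩ := hcons _ _ hadj (aux_getVert_mem_support w (i-1))
            (aux_getVert_mem_support w j)
          rcases hcase with ⟨e1, e2⟩ | ⟨e1, e2⟩
          · have D1 := aux_cyc_inj hcyc (by omega) (by omega) e1
            have D2 := aux_cyc_inj hcyc (by omega) (by omega) e2
            omega
          · have D1 := aux_cyc_inj hcyc (by omega) (by omega) e1
            have D2 := aux_cyc_inj hcyc (by omega) (by omega) e2
            omega
        have hne : w.getVert (i-1) ≠ w.getVert j := by
          intro e
          have D := aux_cyc_inj hcyc (show i - 1 ≤ w.length by omega)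
            (show j ≤ w.length by omega) e
          omega
        exact aux_key hk hxcvx (hAS (show w.getVert (i-1) ∈ A from aux_getVert_mem_support w (i-1)))
          (hAS (show w.getVert j ∈ A from aux_getVert_mem_support w j))
          hax.ne hxb.ne' hax hxb hab hne
      · have hsub : A ⊆ S \ {x} := by
          intro y hy
          refine ⟨hAS hy, ?_⟩
          simp only [Set.mem_singleton_iff]
          rintro rfl
          exact hxA hy
        have hsx : S ⊆ S \ {x} := by
          conv_lhs => rw [hS]
          exact aux_chull_min hsub (by rw [hCvxdef]; exact hxcvx)
        exact (hsx hxS).2 rfl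
    have hU : u0 ∈ S := hAS (show u0 ∈ A from w.start_mem_support)
    have hfin : S ⊆ (∅ : Set V) := by
      conv_lhs => rw [hSeq]
      refine (aux_chull_mono hext).trans (aux_chull_min (Set.Subset.refl _) ?_)
      rw [hCvxdef]
      exact aux_pconvex_empty
    exact Set.notMem_empty u0 (hfin hU)
  · -- diameter
    intro u v
    by_contra hdk
    push_neg at hdk
    obtain ⟨p, hp⟩ := hconn.exists_walk_length_eq_dist u v
    set d := G.dist u v with hd
    have hd3 : 3 ≤ d := by omega
    have hDI : ∀ j, j ≤ d → G.dist u (p.getVert j) = j := by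
      intro j hjd
      obtain ⟨w1, hw1⟩ := aux_exists_take p j
      obtain ⟨w2, hw2⟩ := aux_exists_drop p j
      have h1 : G.dist u (p.getVert j) ≤ j := le_trans (SimpleGraph.dist_le w1) hw1
      have h2 : G.dist (p.getVert j) v ≤ d - j := by
        have := SimpleGraph.dist_le w2
        omega
      have h4 : G.dist u v ≤ G.dist u (p.getVert j) + G.dist (p.getVert j) v :=
        hconn.dist_triangle
      omega
    have hg0 : p.getVert 0 = u := p.getVert_zero
    have hgd : p.getVert d = v := by rw [← hp]; exact p.getVert_length
    set A : Set V := Set.range p.getVert with hA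
    set S : Set V := chull Cvx A with hS
    have hScvx : Cvx S := by
      rw [hS, hCvxdef]
      exact aux_chull_pconvex A
    have hAS : A ⊆ S := by
      conv_rhs => rw [hS]
      exact aux_subset_chull Cvx A
    have hSeq := h S hScvx
    have hext : extremeSet Cvx S ⊆ ({u, v} : Set V) := by
      rintro x ⟨hxS, hxcvx⟩
      rw [hCvxdef] at hxcvx
      by_contra hxuv
      simp only [Set.mem_insert_iff, Set.mem_singleton_iff, not_or] at hxuv
      by_cases hxA : x ∈ A
      · obtain ⟨i, hgi⟩ := hxA
        have hid : i ≤ d := by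
          by_contra hgt
          rw [p.getVert_of_length_le (show p.length ≤ i by omega)] at hgi
          exact hxuv.2 hgi.symm
        have hi0 : i ≠ 0 := by
          rintro rfl
          rw [hg0] at hgi
          exact hxuv.1 hgi.symm
        have hidne : i ≠ d := by
          rintro rfl
          rw [hgd] at hgi
          exact hxuv.2 hgi.symm
        have hax : G.Adj (p.getVert (i-1)) x := by
          have hadj := p.adj_getVert_succ (show i - 1 < p.length by omega)
          rw [show i - 1 + 1 = i by omega, hgi] at hadj
          exact hadj
        have hxb : G.Adj x (p.getVert (i+1)) := by
          have hadj := p.adj_getVert_succ (show i < p.length by omega)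
          rwa [hgi] at hadj
        have hab : ¬ G.Adj (p.getVert (i-1)) (p.getVert (i+1)) := by
          intro hadj
          have e1 := hDI (i-1) (by omega)
          have e2 := hDI (i+1) (by omega)
          have e3 : G.dist (p.getVert (i-1)) (p.getVert (i+1)) = 1 :=
            SimpleGraph.dist_eq_one_iff_adj.mpr hadj
          have e4 : G.dist u (p.getVert (i+1)) ≤
              G.dist u (p.getVert (i-1)) + G.dist (p.getVert (i-1)) (p.getVert (i+1)) :=
            hconn.dist_triangle
          omega
        have hne : p.getVert (i-1) ≠ p.getVert (i+1) := by
          intro e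
          have e1 := hDI (i-1) (by omega)
          have e2 := hDI (i+1) (by omega)
          rw [e] at e1
          omega
        exact aux_key hk hxcvx (hAS (show p.getVert (i-1) ∈ A from ⟨i-1, rfl⟩))
          (hAS (show p.getVert (i+1) ∈ A from ⟨i+1, rfl⟩))
          hax.ne hxb.ne' hax hxb hab hne
      · have hsub : A ⊆ S \ {x} := by
          intro y hy
          refine ⟨hAS hy, ?_⟩
          simp only [Set.mem_singleton_iff]
          rintro rfl
          exact hxA hy
        have hsx : S ⊆ S \ {x} := by
          conv_lhs => rw [hS]
          exact aux_chull_min hsub (by rw [hCvxdef]; exact hxcvx)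
        exact (hsx hxS).2 rfl
    have huv : Cvx ({u, v} : Set V) := by
      rw [hCvxdef]
      intro a b ha hb w2 hw2 y hy
      simp only [Set.mem_insert_iff, Set.mem_singleton_iff] at ha hb
      by_cases hab : a = b
      · subst hab
        have hnil := Walk.isPath_iff_eq_nil.mp hw2.1.1
        subst hnil
        simp only [Walk.support_nil, List.mem_singleton] at hy
        subst hy
        rcases ha with h | h <;> simp [h]
      · exfalso
        have hdl := SimpleGraph.dist_le w2
        have hl := hw2.2
        have hda : G.dist a b = G.dist u v := by
          rcases ha with h1 | h1 <;> rcases hb with h2 | h2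
          · exact absurd (h1.trans h2.symm) hab
          · rw [h1, h2]
          · rw [h1, h2]; exact SimpleGraph.dist_comm
          · exact absurd (h1.trans h2.symm) hab
        omega
    have hsub2 : S ⊆ ({u, v} : Set V) := by
      conv_lhs => rw [hSeq]
      exact (aux_chull_mono hext).trans (aux_chull_min (Set.Subset.refl _) huv)
    have hg1 : p.getVert 1 ∈ S := hAS (show p.getVert 1 ∈ A from ⟨1, rfl⟩)
    have e1 := hDI 1 (by omega)
    have hmem := hsub2 hg1
    simp only [Set.mem_insert_iff, Set.mem_singleton_iff] at hmem
    rcases hmem with h' | h'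
    · rw [h', SimpleGraph.dist_self] at e1
      omega
    · rw [h'] at e1
      omega
end
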